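/- arXiv:1907.08459 — 5 statements merged into one kernel-verified Lean document; each statement's English description precedes it below -/
import Mathlib

section
/- Let n ∈ ℕ, 1 < p < ∞, 1 ≤ r ≤ q < ∞, and let b ∈ SV(0,∞) satisfy condition (C). Then there exists a constant C > 0 such that ‖f‖_{Z_{p,q,n,b̄_{(r,q)}}} ≤ C ‖f‖_{Z_{p,r,n,b}} for every measurable function f on ℝ^n (that is, Z_{p,r,n,b}(ℝ^n) = Z_{p,r,n,b̄_{(r,r)}}(ℝ^n) is continuously embedded into Z_{p,q,n,b̄_{(r,q)}}(ℝ^n); note that b̄_{(r,r)} = b). -/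
open MeasureTheory Set Filter
open scoped ENNReal NNReal Topology

noncomputable section

/-- The `L_q` quasinorm (real exponent `q`) of an `ℝ≥0∞`-valued function on a set `s ⊆ ℝ`. -/
def eLq (g : ℝ → ℝ≥0∞) (q : ℝ) (s : Set ℝ) : ℝ≥0∞ :=
  (∫⁻ t in s, g t ^ q) ^ (1 / q)

/-- The `L_q` quasinorm (real exponent `q`) of a real-valued function on a set `s ⊆ ℝ`. -/
def eLqR (g : ℝ → ℝ) (q : ℝ) (s : Set ℝ) : ℝ≥0∞ :=
  eLq (fun t => ENNReal.ofReal |g t|) q s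

/-- Two real functions are equivalent on `(0,∞)`: each is bounded by a positive constant
multiple of the other. -/
def EquivOn (f g : ℝ → ℝ) : Prop :=
  ∃ c C : ℝ, 0 < c ∧ 0 < C ∧ ∀ t ∈ Ioi (0 : ℝ), c * g t ≤ f t ∧ f t ≤ C * g t

/-- `b` is slowly varying on `(0,∞)`. -/
def SlowlyVarying (b : ℝ → ℝ) : Prop :=
  Measurable b ∧ (∀ t ∈ Ioi (0 : ℝ), 0 < b t) ∧
  ∀ ε : ℝ, 0 < ε →
    (∃ g : ℝ → ℝ, MonotoneOn g (Ioi (0 : ℝ)) ∧ EquivOn (fun t => t ^ ε * b t) g) ∧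
    (∃ g : ℝ → ℝ, AntitoneOn g (Ioi (0 : ℝ)) ∧ EquivOn (fun t => t ^ (-ε) * b t) g)

/-- Condition (C): `‖t^{-1/r} b(t)‖_{r;(0,1)} = ∞` and `‖t^{-1/r} b(t)‖_{r;(1,∞)} < ∞`. -/
def CondC (b : ℝ → ℝ) (r : ℝ) : Prop :=
  eLqR (fun t => t ^ (-(1 / r)) * b t) r (Ioo 0 1) = ∞ ∧
  eLqR (fun t => t ^ (-(1 / r)) * b t) r (Ioi 1) ≠ ∞

/-- `b_r(t) := ‖τ^{-1/r} b(τ)‖_{r;(t,∞)}`. -/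
def brF (b : ℝ → ℝ) (r t : ℝ) : ℝ≥0∞ :=
  eLqR (fun τ => τ ^ (-(1 / r)) * b τ) r (Ioi t)

/-- `b̄_{(r,q)}(t) := (b_r(t))^{1-r/q} (b(t))^{r/q}`. -/
def bbarF (b : ℝ → ℝ) (r q t : ℝ) : ℝ :=
  (brF b r t).toReal ^ (1 - r / q) * b t ^ (r / q)

/-- `b̃_{(r,q,n,p)}(t) := (b_r(t^{1/n}))^{1-r/q+r/max{p,q}} (b(t^{1/n}))^{r/q-r/max{p,q}}`. -/
def btildeF (b : ℝ → ℝ) (r q p : ℝ) (n : ℕ) (t : ℝ) : ℝ :=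
  (brF b r (t ^ ((n : ℝ)⁻¹))).toReal ^ (1 - r / q + r / max p q) *
    b (t ^ ((n : ℝ)⁻¹)) ^ (r / q - r / max p q)

/-- The non-increasing rearrangement
`f^*(t) = inf {λ ≥ 0 : |{x : |f(x)| > λ}|ₙ ≤ t}` (with value `∞` if no such `λ` exists). -/
def rearr {n : ℕ} (f : EuclideanSpace ℝ (Fin n) → ℝ) (t : ℝ) : ℝ≥0∞ :=
  sInf {l : ℝ≥0∞ | volume {x : EuclideanSpace ℝ (Fin n) | l < (‖f x‖₊ : ℝ≥0∞)} ≤ ENNReal.ofReal t}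

/-- The quasinorm of the space `Z_{p,q,n,β}(ℝⁿ)`:
`‖ t^{-1/q} β(t^{1/n}) ‖f^*‖_{p;(0,t)} ‖_{q;(0,∞)}`. -/
def Znorm (p q : ℝ) (n : ℕ) (β : ℝ → ℝ) (f : EuclideanSpace ℝ (Fin n) → ℝ) : ℝ≥0∞ :=
  eLq (fun t => ENNReal.ofReal (t ^ (-(1 / q)) * β (t ^ ((n : ℝ)⁻¹))) *
        eLq (rearr f) p (Ioo 0 t)) q (Ioi 0)

/-- The Lorentz–Karamata quasinorm `‖f‖_{p,q;β} = ‖ t^{1/p-1/q} β(t) f^*(t) ‖_{q;(0,∞)}`. -/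
def LKnorm (p q : ℝ) {n : ℕ} (β : ℝ → ℝ) (f : EuclideanSpace ℝ (Fin n) → ℝ) : ℝ≥0∞ :=
  eLq (fun t => ENNReal.ofReal (t ^ (1 / p - 1 / q) * β t) * rearr f t) q (Ioi 0)

/-- The modulus of smoothness `ω₁(f,t)_p = sup_{|h| ≤ t} ‖f(·+h) - f‖_p`. -/
def smoothMod {n : ℕ} (p : ℝ) (f : EuclideanSpace ℝ (Fin n) → ℝ) (t : ℝ) : ℝ≥0∞ :=
  ⨆ (h : EuclideanSpace ℝ (Fin n)) (_ : ‖h‖ ≤ t),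
    eLpNorm (fun x => f (x + h) - f x) (ENNReal.ofReal p) volume

/-- The Besov norm `‖f‖_{B^{0,b}_{p,r}} = ‖f‖_p + ‖t^{-1/r} b(t) ω₁(f,t)_p‖_{r;(0,∞)}`. -/
def besovNorm {n : ℕ} (p r : ℝ) (b : ℝ → ℝ) (f : EuclideanSpace ℝ (Fin n) → ℝ) : ℝ≥0∞ :=
  eLpNorm f (ENNReal.ofReal p) volume +
    eLq (fun t => ENNReal.ofReal (t ^ (-(1 / r)) * b t) * smoothMod p f t) r (Ioi 0)

/-- Membership in the Besov space `B^{0,b}_{p,r}(ℝⁿ)`. -/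
def MemBesov {n : ℕ} (p r : ℝ) (b : ℝ → ℝ) (f : EuclideanSpace ℝ (Fin n) → ℝ) : Prop :=
  MemLp f (ENNReal.ofReal p) volume ∧ besovNorm p r b f ≠ ∞

/-!
Write `Φ(t) = ‖f^*‖_{p;(0,t)}`, which is non-decreasing in `t`. Substituting `τ = u^{1/n}`,
`b_r(t^{1/n})^r = (1/n) ∫_t^∞ u^{-1} b(u^{1/n})^r du`, so monotonicity of `Φ` gives
`(b_r(t^{1/n}) Φ(t))^r ≤ ‖f‖_{Z_{p,r,n,b}}^r`. Since `b̄_{(r,q)}^q = b_r^{q-r} b^r`, the `q`-th power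
of the integrand of `‖f‖_{Z_{p,q,n,b̄}}` is at most `(b_r Φ)^{q-r}` times the `r`-th power of the
integrand of `‖f‖_{Z_{p,r,n,b}}`; integrating gives the embedding with constant `1`.
-/

lemma image_rpow_Ioi {t m : ℝ} (ht : 0 ≤ t) (hm : 0 < m) :
    (fun u : ℝ => u ^ m) '' Ioi t = Ioi (t ^ m) := by
  ext y
  constructor
  · rintro ⟨u, hu, rfl⟩
    exact Real.rpow_lt_rpow ht hu hm
  · intro hy
    have hy0 : 0 ≤ y := (Real.rpow_nonneg ht m).trans (le_of_lt hy)
    refine ⟨y ^ m⁻¹, ?_, Real.rpow_inv_rpow hy0 hm.ne'⟩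
    have := Real.rpow_lt_rpow (Real.rpow_nonneg ht m) hy (inv_pos.2 hm)
    rwa [Real.rpow_rpow_inv ht hm.ne'] at this

lemma lintegral_Ioi_rpow_inv_mul {t m : ℝ} (ht : 0 ≤ t) (hm : 0 < m) (g : ℝ → ℝ≥0∞) :
    ∫⁻ τ in Ioi (t ^ m), (ENNReal.ofReal τ)⁻¹ * g τ
      = ENNReal.ofReal m * ∫⁻ u in Ioi t, (ENNReal.ofReal u)⁻¹ * g (u ^ m) := by
  have hderiv : ∀ u ∈ Ioi t,
      HasDerivWithinAt (fun u : ℝ => u ^ m) (m * u ^ (m - 1)) (Ioi t) u :=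
    fun u hu => (Real.hasDerivAt_rpow_const (Or.inl (ht.trans_lt hu).ne')).hasDerivWithinAt
  have hmono : MonotoneOn (fun u : ℝ => u ^ m) (Ioi t) :=
    fun u hu _ _ huv => Real.rpow_le_rpow (ht.trans (le_of_lt hu)) huv hm.le
  rw [← image_rpow_Ioi ht hm,
    lintegral_image_eq_lintegral_deriv_mul_of_monotoneOn measurableSet_Ioi hderiv hmono,
    ← lintegral_const_mul' _ _ ENNReal.ofReal_ne_top]
  refine setLIntegral_congr_fun measurableSet_Ioi fun u hu => ?_
  have hu0 : 0 < u := ht.trans_lt hu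
  have hum : 0 < u ^ m := Real.rpow_pos_of_pos hu0 m
  have hjac : m * u ^ (m - 1) * (u ^ m)⁻¹ = m * u⁻¹ := by
    rw [Real.rpow_sub_one hu0.ne']
    field_simp
  rw [← ENNReal.ofReal_inv_of_pos hum, ← ENNReal.ofReal_inv_of_pos hu0, ← mul_assoc,
    ← ENNReal.ofReal_mul (by positivity), hjac, ENNReal.ofReal_mul hm.le, mul_assoc]

lemma ofReal_rpow_neg_inv_mul_rpow {t x e : ℝ} (ht : 0 < t) (he : 0 < e) :
    ENNReal.ofReal (t ^ (-(1 / e)) * x) ^ e = (ENNReal.ofReal t)⁻¹ * ENNReal.ofReal x ^ e := by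
  rw [ENNReal.ofReal_mul (Real.rpow_nonneg ht.le _), ENNReal.mul_rpow_of_nonneg _ _ he.le,
    ← ENNReal.ofReal_rpow_of_pos ht, ← ENNReal.rpow_mul, neg_mul, one_div,
    inv_mul_cancel₀ he.ne', ENNReal.rpow_neg_one]

lemma eLq_mono_set {g : ℝ → ℝ≥0∞} {q : ℝ} {s s' : Set ℝ} (hss' : s ⊆ s') (hq : 0 ≤ q) :
    eLq g q s ≤ eLq g q s' :=
  ENNReal.rpow_le_rpow (lintegral_mono_set hss') (by positivity)

theorem lintegral_rpow_rpow_one_div_le {α : Type*} [MeasurableSpace α] {μ : Measure α}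
    {F G : α → ℝ≥0∞} {r q : ℝ} (hr : 0 < r) (hrq : r ≤ q)
    (h : ∀ᵐ x ∂μ, F x ^ q ≤ (∫⁻ y, G y ^ r ∂μ) ^ ((q - r) / r) * G x ^ r) :
    (∫⁻ x, F x ^ q ∂μ) ^ (1 / q) ≤ (∫⁻ x, G x ^ r ∂μ) ^ (1 / r) := by
  set A := ∫⁻ x, G x ^ r ∂μ
  have hq : 0 < q := hr.trans_le hrq
  have he : 0 ≤ (q - r) / r := div_nonneg (sub_nonneg.2 hrq) hr.le
  rcases eq_or_ne A ∞ with hA | hA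
  · rw [hA, ENNReal.top_rpow_of_pos (by positivity)]
    exact le_top
  have hint : ∫⁻ x, F x ^ q ∂μ ≤ A ^ (q / r) :=
    calc ∫⁻ x, F x ^ q ∂μ ≤ ∫⁻ x, A ^ ((q - r) / r) * G x ^ r ∂μ := lintegral_mono_ae h
      _ = A ^ ((q - r) / r) * A :=
        lintegral_const_mul' _ _ (ENNReal.rpow_ne_top_of_nonneg he hA)
      _ = A ^ (q / r) := by
        rw [show q / r = (q - r) / r + 1 by field_simp; ring,
          ENNReal.rpow_add_of_nonneg _ _ he zero_le_one, ENNReal.rpow_one]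
  calc (∫⁻ x, F x ^ q ∂μ) ^ (1 / q) ≤ (A ^ (q / r)) ^ (1 / q) := by gcongr
    _ = A ^ (1 / r) := by
      rw [← ENNReal.rpow_mul]
      congr 1
      field_simp

section WeightedTail

variable {b : ℝ → ℝ} {r : ℝ}

lemma brF_rpow (hr : 0 < r) {s : ℝ} (hs : 0 ≤ s) (hb : ∀ t ∈ Ioi (0 : ℝ), 0 ≤ b t) :
    brF b r s ^ r = ∫⁻ τ in Ioi s, (ENNReal.ofReal τ)⁻¹ * ENNReal.ofReal (b τ) ^ r := by
  rw [brF, eLqR, eLq, ← ENNReal.rpow_mul, one_div_mul_cancel hr.ne', ENNReal.rpow_one]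
  refine setLIntegral_congr_fun measurableSet_Ioi fun τ hτ => ?_
  have hτ0 : 0 < τ := hs.trans_lt hτ
  rw [abs_of_nonneg (mul_nonneg (Real.rpow_nonneg hτ0.le _) (hb τ hτ0)),
    ofReal_rpow_neg_inv_mul_rpow hτ0 hr]

lemma ofReal_bbarF_rpow_le {q s : ℝ} (hr : 0 < r) (hrq : r ≤ q) (hbs : 0 ≤ b s) :
    ENNReal.ofReal (bbarF b r q s) ^ q ≤ brF b r s ^ (q - r) * ENNReal.ofReal (b s) ^ r := by
  have hq : 0 < q := hr.trans_le hrq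
  have he : 0 ≤ 1 - r / q := sub_nonneg.2 ((div_le_one hq).2 hrq)
  calc ENNReal.ofReal (bbarF b r q s) ^ q
      ≤ (brF b r s ^ (1 - r / q) * ENNReal.ofReal (b s) ^ (r / q)) ^ q := by
        rw [bbarF, ENNReal.ofReal_mul (by positivity),
          ← ENNReal.ofReal_rpow_of_nonneg ENNReal.toReal_nonneg he,
          ← ENNReal.ofReal_rpow_of_nonneg hbs (by positivity)]
        gcongr
        exact ENNReal.ofReal_toReal_le
    _ = brF b r s ^ (q - r) * ENNReal.ofReal (b s) ^ r := by
        rw [ENNReal.mul_rpow_of_nonneg _ _ hq.le, ← ENNReal.rpow_mul, ← ENNReal.rpow_mul,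
          sub_mul, one_mul, div_mul_cancel₀ _ hq.ne']

variable {m : ℝ} {Φ : ℝ → ℝ≥0∞}

lemma brF_rpow_mul_rpow_le (hm : 0 < m) (hm1 : m ≤ 1) (hr : 0 < r)
    (hb : ∀ t ∈ Ioi (0 : ℝ), 0 ≤ b t) (hΦ : MonotoneOn Φ (Ioi 0)) {t : ℝ} (ht : 0 < t) :
    brF b r (t ^ m) ^ r * Φ t ^ r
      ≤ ∫⁻ u in Ioi 0, (ENNReal.ofReal (u ^ (-(1 / r)) * b (u ^ m)) * Φ u) ^ r :=
  calc brF b r (t ^ m) ^ r * Φ t ^ r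
      = ENNReal.ofReal m * (∫⁻ u in Ioi t, (ENNReal.ofReal u)⁻¹ * ENNReal.ofReal (b (u ^ m)) ^ r)
          * Φ t ^ r := by
        rw [brF_rpow hr (Real.rpow_nonneg ht.le m) hb, lintegral_Ioi_rpow_inv_mul ht.le hm]
    _ ≤ (∫⁻ u in Ioi t, (ENNReal.ofReal u)⁻¹ * ENNReal.ofReal (b (u ^ m)) ^ r) * Φ t ^ r := by
        gcongr
        exact mul_le_of_le_one_left' (ENNReal.ofReal_le_one.2 hm1)
    _ ≤ ∫⁻ u in Ioi t, (ENNReal.ofReal u)⁻¹ * ENNReal.ofReal (b (u ^ m)) ^ r * Φ t ^ r :=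
        lintegral_mul_const_le _ _
    _ ≤ ∫⁻ u in Ioi t, (ENNReal.ofReal (u ^ (-(1 / r)) * b (u ^ m)) * Φ u) ^ r := by
        refine setLIntegral_mono' measurableSet_Ioi fun u hu => ?_
        rw [ENNReal.mul_rpow_of_nonneg _ _ hr.le, ofReal_rpow_neg_inv_mul_rpow (ht.trans hu) hr]
        gcongr
        exact hΦ ht (ht.trans hu) (le_of_lt hu)
    _ ≤ ∫⁻ u in Ioi 0, (ENNReal.ofReal (u ^ (-(1 / r)) * b (u ^ m)) * Φ u) ^ r :=
        lintegral_mono_set (Ioi_subset_Ioi ht.le)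

theorem eLq_bbarF_le {q : ℝ} (hm : 0 < m) (hm1 : m ≤ 1) (hr : 0 < r) (hrq : r ≤ q)
    (hb : ∀ t ∈ Ioi (0 : ℝ), 0 ≤ b t) (hΦ : MonotoneOn Φ (Ioi 0)) :
    eLq (fun t => ENNReal.ofReal (t ^ (-(1 / q)) * bbarF b r q (t ^ m)) * Φ t) q (Ioi 0)
      ≤ eLq (fun t => ENNReal.ofReal (t ^ (-(1 / r)) * b (t ^ m)) * Φ t) r (Ioi 0) := by
  refine lintegral_rpow_rpow_one_div_le hr hrq
    ((ae_restrict_mem measurableSet_Ioi).mono fun t ht => ?_)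
  have hq : 0 < q := hr.trans_le hrq
  have hbt : 0 ≤ b (t ^ m) := hb _ (Real.rpow_pos_of_pos ht m)
  have hsplit : Φ t ^ q = Φ t ^ (q - r) * Φ t ^ r := by
    rw [← ENNReal.rpow_add_of_nonneg _ _ (sub_nonneg.2 hrq) hr.le, sub_add_cancel]
  set T := (ENNReal.ofReal t)⁻¹
  calc (ENNReal.ofReal (t ^ (-(1 / q)) * bbarF b r q (t ^ m)) * Φ t) ^ q
      = T * ENNReal.ofReal (bbarF b r q (t ^ m)) ^ q * Φ t ^ q := by
        rw [ENNReal.mul_rpow_of_nonneg _ _ hq.le, ofReal_rpow_neg_inv_mul_rpow ht hq]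
    _ ≤ T * (brF b r (t ^ m) ^ (q - r) * ENNReal.ofReal (b (t ^ m)) ^ r)
          * (Φ t ^ (q - r) * Φ t ^ r) := by
        rw [hsplit]
        gcongr
        exact ofReal_bbarF_rpow_le hr hrq hbt
    _ = (brF b r (t ^ m) ^ r * Φ t ^ r) ^ ((q - r) / r)
          * (T * ENNReal.ofReal (b (t ^ m)) ^ r * Φ t ^ r) := by
        rw [ENNReal.mul_rpow_of_nonneg _ _ (div_nonneg (sub_nonneg.2 hrq) hr.le),
          ← ENNReal.rpow_mul, ← ENNReal.rpow_mul, mul_div_cancel₀ _ hr.ne']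
        ring
    _ ≤ (∫⁻ u in Ioi 0, (ENNReal.ofReal (u ^ (-(1 / r)) * b (u ^ m)) * Φ u) ^ r) ^ ((q - r) / r)
          * (ENNReal.ofReal (t ^ (-(1 / r)) * b (t ^ m)) * Φ t) ^ r := by
        rw [ENNReal.mul_rpow_of_nonneg _ _ hr.le, ofReal_rpow_neg_inv_mul_rpow ht hr]
        gcongr
        exact brF_rpow_mul_rpow_le hm hm1 hr hb hΦ ht

end WeightedTail

theorem Z_embed_Z_general (n : ℕ) (hn : 0 < n) (p r q : ℝ)
    (hp1 : 1 < p) (hr : 1 ≤ r) (hrq : r ≤ q)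
    (b : ℝ → ℝ) (hb : SlowlyVarying b) :
    ∃ C : ℝ, 0 < C ∧ ∀ f : EuclideanSpace ℝ (Fin n) → ℝ, Measurable f →
      Znorm p q n (bbarF b r q) f ≤ ENNReal.ofReal C * Znorm p r n b f := by
  refine ⟨1, one_pos, fun f _ => ?_⟩
  rw [ENNReal.ofReal_one, one_mul]
  have hΦ : Monotone fun t : ℝ => eLq (rearr f) p (Ioo 0 t) :=
    fun _ _ hst => eLq_mono_set (Ioo_subset_Ioo_right hst) (by linarith)
  exact eLq_bbarF_le (inv_pos.2 (Nat.cast_pos.2 hn)) (inv_le_one_of_one_le₀ (Nat.one_le_cast.2 hn))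
    (by linarith) hrq (fun t ht => (hb.2.1 t ht).le) (hΦ.monotoneOn _)

/-- `Z_{p,r,n,b}(ℝⁿ) ↪ Z_{p,q,n,b̄_{(r,q)}}(ℝⁿ)` for `1 ≤ r ≤ q < ∞`. -/
theorem Z_embed_Z (n : ℕ) (hn : 0 < n) (p r q : ℝ)
    (hp1 : 1 < p) (hr : 1 ≤ r) (hrq : r ≤ q)
    (b : ℝ → ℝ) (hb : SlowlyVarying b) (hbC : CondC b r) :
    ∃ C : ℝ, 0 < C ∧ ∀ f : EuclideanSpace ℝ (Fin n) → ℝ, Measurable f →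
      Znorm p q n (bbarF b r q) f ≤ ENNReal.ofReal C * Znorm p r n b f :=
  Z_embed_Z_general n hn p r q hp1 hr hrq b hb

end
end

section
/- Let n ∈ ℕ, 1 < p < ∞, let b ∈ SV(0,∞) satisfy condition (C) with 1 ≤ r ≤ p, and take q = p. Set b̄ = b̄_{(r,p)} and b̃ = b̃_{(r,p,n,p)}. Then the quasi-norms are equivalent: there exist constants c, C > 0 such that c ‖f‖_{p,p;b̃} ≤ ‖f‖_{Z_{p,p,n,b̄}} ≤ C ‖f‖_{p,p;b̃} for every measurable function f on ℝ^n; in particular Z_{p,p,n,b̄}(ℝ^n) = L_{p,p;b̃}(ℝ^n). -/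
open MeasureTheory Set Filter
open scoped ENNReal NNReal Topology

noncomputable section

/-! Let `ν = τ⁻¹ b(τ)^r dτ` and `G(x) = ν (x, ∞) = b_r(x)^r`, finite for `x > 0`. Then
`b̄(u)^p = G(u)^{p/r - 1} b(u)^r` and `b̃(t)^p = G(t^{1/n})^{p/r}`. By Tonelli,
`‖f‖_Z^p = ∫ f^*(s)^p Φ(s) ds` with `Φ(s) = ∫_s^∞ t⁻¹ b̄(t^{1/n})^p dt`, and the substitution
`t = u^n` gives `Φ(s) = n ∫_{s^{1/n}}^∞ G^{p/r - 1} dν`. As `G` decreases with `dG = -dν`, this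
integral lies between `(G(s^{1/n}) / 2)^{p/r}` and `G(s^{1/n})^{p/r}`, the weight of
`‖f‖_{p,p;b̃}^p`. -/

namespace MeasureTheory

variable {ν : Measure ℝ}

theorem antitone_measure_Ioi : Antitone fun x => ν (Ioi x) :=
  fun _ _ h => measure_mono (Ioi_subset_Ioi h)

theorem setLIntegral_Ioi_measure_Ioi_rpow_le (x : ℝ) {α : ℝ} (hα : 0 ≤ α) :
    ∫⁻ u in Ioi x, ν (Ioi u) ^ α ∂ν ≤ ν (Ioi x) ^ (α + 1) :=
  calc ∫⁻ u in Ioi x, ν (Ioi u) ^ α ∂ν ≤ ∫⁻ _ in Ioi x, ν (Ioi x) ^ α ∂ν :=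
        setLIntegral_mono measurable_const fun _ hu =>
          ENNReal.rpow_le_rpow (measure_mono (Ioi_subset_Ioi (le_of_lt hu))) hα
    _ = ν (Ioi x) ^ (α + 1) := by
        rw [setLIntegral_const, ENNReal.rpow_add_of_nonneg _ _ hα zero_le_one, ENNReal.rpow_one]

theorem measure_le_of_forall_measure_Ioi_le [NullSingletonClass ν] {B : Set ℝ}
    (hbdd : BddBelow B) {m : ℝ≥0∞} (hm : ∀ u ∈ B, ν (Ioi u) ≤ m) : ν B ≤ m := by
  rcases B.eq_empty_or_nonempty with rfl | hne
  · simp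
  obtain ⟨u, hu_anti, -, hu_lim, hu_mem⟩ := (isGLB_csInf hne hbdd).exists_seq_antitone_tendsto hne
  have hcover : B ⊆ {sInf B} ∪ ⋃ k, Ioi (u k) := by
    intro v hv
    rcases (csInf_le hbdd hv).eq_or_lt with h | h
    · exact Or.inl h.symm
    · obtain ⟨k, hk⟩ := (hu_lim.eventually (gt_mem_nhds h)).exists
      exact Or.inr (mem_iUnion.mpr ⟨k, hk⟩)
  calc ν B ≤ ν ({sInf B} ∪ ⋃ k, Ioi (u k)) := measure_mono hcover
    _ ≤ ν {sInf B} + ν (⋃ k, Ioi (u k)) := measure_union_le _ _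
    _ = ⨆ k, ν (Ioi (u k)) := by
        rw [measure_singleton, zero_add, Monotone.measure_iUnion]
        exact fun _ _ hkl => Ioi_subset_Ioi (hu_anti hkl)
    _ ≤ m := iSup_le fun k => hm _ (hu_mem k)

/-- At least half of the `ν`-mass of `Ioi x` lies where `ν (Ioi u) > ν (Ioi x) / 2`: the rest sits
inside a single tail of mass at most `ν (Ioi x) / 2`, as `ν` has no atoms. -/
theorem half_rpow_le_setLIntegral_Ioi_measure_Ioi_rpow [NullSingletonClass ν] {x α : ℝ}
    (hα : 0 ≤ α) (hx : ν (Ioi x) ≠ ∞) :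
    (ν (Ioi x) / 2) ^ (α + 1) ≤ ∫⁻ u in Ioi x, ν (Ioi u) ^ α ∂ν := by
  set m := ν (Ioi x) / 2
  set A := Ioi x ∩ {u | m < ν (Ioi u)}
  have hlow : ν (Ioi x ∩ {u | ν (Ioi u) ≤ m}) ≤ m :=
    measure_le_of_forall_measure_Ioi_le ⟨x, fun _ hu => le_of_lt hu.1⟩ fun _ hu => hu.2
  have hA : m ≤ ν A := by
    have hsplit : ν (Ioi x) ≤ ν A + m := by
      calc ν (Ioi x) ≤ ν A + ν (Ioi x ∩ {u | ν (Ioi u) ≤ m}) := by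
            refine (measure_mono fun u hu => ?_).trans (measure_union_le _ _)
            rcases lt_or_ge m (ν (Ioi u)) with h | h
            exacts [Or.inl ⟨hu, h⟩, Or.inr ⟨hu, h⟩]
        _ ≤ ν A + m := add_le_add_right hlow _
    have := tsub_le_iff_right.mpr hsplit
    rwa [ENNReal.sub_half hx] at this
  calc m ^ (α + 1) = m ^ α * m := by
        rw [ENNReal.rpow_add_of_nonneg _ _ hα zero_le_one, ENNReal.rpow_one]
    _ ≤ m ^ α * ν A := mul_le_mul_right hA _
    _ = ∫⁻ _ in A, m ^ α ∂ν := (setLIntegral_const _ _).symm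
    _ ≤ ∫⁻ u in A, ν (Ioi u) ^ α ∂ν :=
        setLIntegral_mono (antitone_measure_Ioi.measurable.pow_const α)
          fun u hu => ENNReal.rpow_le_rpow hu.2.le hα
    _ ≤ ∫⁻ u in Ioi x, ν (Ioi u) ^ α ∂ν := lintegral_mono_set inter_subset_left

theorem lintegral_Ioi_mul_setLIntegral_Ioo_comm {φ ψ : ℝ → ℝ≥0∞} (hφ : Measurable φ)
    (hψ : Measurable ψ) :
    ∫⁻ t in Ioi 0, φ t * ∫⁻ s in Ioo 0 t, ψ s = ∫⁻ s in Ioi 0, ψ s * ∫⁻ t in Ioi s, φ t := by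
  set F : ℝ → ℝ → ℝ≥0∞ := fun t s => if s < t then φ t * ψ s else 0
  have hF : Measurable (Function.uncurry F) :=
    Measurable.ite (measurableSet_lt measurable_snd measurable_fst)
      ((hφ.comp measurable_fst).mul (hψ.comp measurable_snd)) measurable_const
  have hleft (t : ℝ) : φ t * ∫⁻ s in Ioo 0 t, ψ s = ∫⁻ s in Ioi 0, F t s := by
    rw [← lintegral_const_mul _ hψ, ← Ioi_inter_Iio, inter_comm,
      ← Measure.restrict_restrict measurableSet_Iio, ← lintegral_indicator measurableSet_Iio]
    simp only [indicator, mem_Iio, F]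
  have hright (s : ℝ) (hs : s ∈ Ioi 0) : ψ s * ∫⁻ t in Ioi s, φ t = ∫⁻ t in Ioi 0, F t s := by
    rw [← lintegral_const_mul _ hφ, ← inter_eq_left.mpr (Ioi_subset_Ioi (le_of_lt hs)),
      ← Measure.restrict_restrict measurableSet_Ioi, ← lintegral_indicator measurableSet_Ioi]
    simp only [indicator, mem_Ioi, F, mul_comm]
  rw [lintegral_congr fun t => hleft t, setLIntegral_congr_fun measurableSet_Ioi hright]
  exact lintegral_lintegral_swap hF.aemeasurable

theorem setLIntegral_Ioi_pow_eq {n : ℕ} (hn : n ≠ 0) (c : ℝ → ℝ≥0∞) {y : ℝ} (hy : 0 < y) :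
    ∫⁻ t in Ioi (y ^ n), ENNReal.ofReal t⁻¹ * c (t ^ (n : ℝ)⁻¹) =
      n * ∫⁻ u in Ioi y, ENNReal.ofReal u⁻¹ * c u := by
  have himage : (· ^ n) '' Ioi y = Ioi (y ^ n) := by
    refine (image_subset_iff.mpr fun u hu => pow_lt_pow_left₀ hu hy.le hn).antisymm fun t ht => ?_
    have ht0 : 0 < t := (pow_pos hy n).trans ht
    refine ⟨t ^ (n : ℝ)⁻¹, ?_, Real.rpow_inv_natCast_pow ht0.le hn⟩
    have := Real.rpow_lt_rpow (pow_pos hy n).le ht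
      (inv_pos.mpr (Nat.cast_pos.mpr (Nat.pos_of_ne_zero hn)))
    rwa [Real.pow_rpow_inv_natCast hy.le hn] at this
  rw [← himage, lintegral_image_eq_lintegral_abs_deriv_mul measurableSet_Ioi
    (fun u _ => (hasDerivAt_pow n u).hasDerivWithinAt)
    ((pow_left_strictMonoOn₀ hn).injOn.mono fun u hu => (hy.trans hu).le),
    ← lintegral_const_mul' _ _ (ENNReal.natCast_ne_top n)]
  refine setLIntegral_congr_fun measurableSet_Ioi fun u hu => ?_
  have hu0 : 0 < u := hy.trans hu
  have hjac : |(n : ℝ) * u ^ (n - 1)| * (u ^ n)⁻¹ = n * u⁻¹ := by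
    rw [abs_of_nonneg (by positivity), ← Nat.sub_add_cancel (Nat.pos_of_ne_zero hn), pow_succ]
    field_simp
    simp
  rw [Real.pow_rpow_inv_natCast hu0.le hn, ← mul_assoc, ← ENNReal.ofReal_mul (abs_nonneg _), hjac,
    ENNReal.ofReal_mul n.cast_nonneg, ENNReal.ofReal_natCast, mul_assoc]

theorem rpow_setLIntegral_le_of_mul_le {α : Type*} [MeasurableSpace α] {μ : Measure α}
    {s : Set α} (hs : MeasurableSet s) {F G : α → ℝ≥0∞} {c₁ c₂ : ℝ≥0∞} (hc₁ : c₁ ≠ ∞)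
    (hc₂ : c₂ ≠ ∞) (h : ∀ x ∈ s, c₁ * F x ≤ c₂ * G x) {p : ℝ} (hp : 0 ≤ p) :
    c₁ ^ p * (∫⁻ x in s, F x ∂μ) ^ p ≤ c₂ ^ p * (∫⁻ x in s, G x ∂μ) ^ p := by
  rw [← ENNReal.mul_rpow_of_nonneg _ _ hp, ← ENNReal.mul_rpow_of_nonneg _ _ hp,
    ← lintegral_const_mul' _ _ hc₁, ← lintegral_const_mul' _ _ hc₂]
  exact ENNReal.rpow_le_rpow (setLIntegral_mono' hs h) hp

end MeasureTheory

open MeasureTheory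

theorem ENNReal.ofReal_rpow_neg_one_div_mul_rpow {t p : ℝ} (ht : 0 < t) (hp : 0 < p) (β : ℝ) :
    ENNReal.ofReal (t ^ (-(1 / p)) * β) ^ p = ENNReal.ofReal t⁻¹ * ENNReal.ofReal β ^ p := by
  rw [ENNReal.ofReal_mul (by positivity), ENNReal.mul_rpow_of_nonneg _ _ hp.le,
    ENNReal.ofReal_rpow_of_pos (by positivity), ← Real.rpow_mul ht.le, neg_mul,
    one_div_mul_cancel hp.ne', Real.rpow_neg_one]

theorem rearr_antitone {n : ℕ} (f : EuclideanSpace ℝ (Fin n) → ℝ) : Antitone (rearr f) :=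
  fun _ _ hst => sInf_le_sInf fun _ hl => hl.trans (ENNReal.ofReal_le_ofReal hst)

theorem Znorm_self_eq {p : ℝ} (hp : 0 < p) (n : ℕ) {β : ℝ → ℝ} (hβ : Measurable β)
    (f : EuclideanSpace ℝ (Fin n) → ℝ) :
    Znorm p p n β f = (∫⁻ s in Ioi 0, rearr f s ^ p *
      ∫⁻ t in Ioi s, ENNReal.ofReal (t ^ (-(1 / p)) * β (t ^ (n : ℝ)⁻¹)) ^ p) ^ (1 / p) := by
  rw [← lintegral_Ioi_mul_setLIntegral_Ioo_comm (by fun_prop)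
    ((rearr_antitone f).measurable.pow_const p)]
  refine congrArg (· ^ (1 / p)) (setLIntegral_congr_fun measurableSet_Ioi fun t _ => ?_)
  rw [ENNReal.mul_rpow_of_nonneg _ _ hp.le, eLq, ← ENNReal.rpow_mul, one_div_mul_cancel hp.ne',
    ENNReal.rpow_one]

theorem LKnorm_self_eq {p : ℝ} (hp : 0 ≤ p) {n : ℕ} (β : ℝ → ℝ)
    (f : EuclideanSpace ℝ (Fin n) → ℝ) :
    LKnorm p p β f = (∫⁻ t in Ioi 0, rearr f t ^ p * ENNReal.ofReal (β t) ^ p) ^ (1 / p) := by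
  simp only [LKnorm, eLq, sub_self, Real.rpow_zero, one_mul, ENNReal.mul_rpow_of_nonneg _ _ hp]
  simp only [mul_comm]

def brDensity (b : ℝ → ℝ) (r τ : ℝ) : ℝ≥0∞ :=
  ENNReal.ofReal |τ ^ (-(1 / r)) * b τ| ^ r

/-- The measure `τ⁻¹ b(τ)^r dτ`, whose tail `ν (t, ∞)` is `b_r(t)^r`. -/
def brMeasure (b : ℝ → ℝ) (r : ℝ) : Measure ℝ :=
  volume.withDensity (brDensity b r)

instance (b : ℝ → ℝ) (r : ℝ) : NullSingletonClass (brMeasure b r) := by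
  unfold brMeasure
  infer_instance

theorem brDensity_eq {b : ℝ → ℝ} {r τ : ℝ} (hr : 0 < r) (hτ : 0 < τ) (hbτ : 0 ≤ b τ) :
    brDensity b r τ = ENNReal.ofReal τ⁻¹ * ENNReal.ofReal (b τ) ^ r := by
  rw [brDensity, abs_of_nonneg (by positivity), ENNReal.ofReal_rpow_neg_one_div_mul_rpow hτ hr]

theorem brF_eq (b : ℝ → ℝ) (r t : ℝ) : brF b r t = brMeasure b r (Ioi t) ^ (1 / r) := by
  rw [brMeasure, withDensity_apply _ measurableSet_Ioi]
  rfl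

theorem measurable_bbarF {b : ℝ → ℝ} (hb : Measurable b) (r p : ℝ) : Measurable (bbarF b r p) := by
  have : Measurable (brF b r) := by
    simp only [funext (brF_eq b r)]
    exact antitone_measure_Ioi.measurable.pow_const _
  unfold bbarF
  fun_prop

theorem ofReal_bbarF_rpow {b : ℝ → ℝ} {r p u : ℝ} (hr : 0 < r) (hrp : r ≤ p) (hbu : 0 ≤ b u)
    (hν : brMeasure b r (Ioi u) ≠ ∞) :
    ENNReal.ofReal (bbarF b r p u) ^ p =
      brMeasure b r (Ioi u) ^ ((p - r) / r) * ENNReal.ofReal (b u) ^ r := by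
  have hp : 0 < p := hr.trans_le hrp
  rw [bbarF, brF_eq, ENNReal.ofReal_mul (by positivity), ENNReal.mul_rpow_of_nonneg _ _ hp.le,
    ← ENNReal.ofReal_rpow_of_nonneg ENNReal.toReal_nonneg
      (sub_nonneg.mpr ((div_le_one hp).mpr hrp)),
    ← ENNReal.ofReal_rpow_of_nonneg hbu (by positivity),
    ENNReal.ofReal_toReal (ENNReal.rpow_ne_top_of_nonneg (by positivity) hν),
    ← ENNReal.rpow_mul, ← ENNReal.rpow_mul, ← ENNReal.rpow_mul]
  congr 2 <;> field_simp

theorem ofReal_btildeF_rpow {b : ℝ → ℝ} {r p t : ℝ} {n : ℕ} (hr : 0 < r)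
    (hν : brMeasure b r (Ioi (t ^ (n : ℝ)⁻¹)) ≠ ∞) :
    ENNReal.ofReal (btildeF b r p p n t) ^ p = brMeasure b r (Ioi (t ^ (n : ℝ)⁻¹)) ^ (p / r) := by
  rw [btildeF, max_self, sub_add_cancel, sub_self, Real.rpow_one, Real.rpow_zero, mul_one, brF_eq,
    ENNReal.ofReal_toReal (ENNReal.rpow_ne_top_of_nonneg (by positivity) hν), ← ENNReal.rpow_mul,
    one_div_mul_eq_div]

theorem SlowlyVarying.bddAbove_image_Icc {b : ℝ → ℝ} (hb : SlowlyVarying b) {x : ℝ} (hx : 0 < x)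
    (y : ℝ) : BddAbove (b '' Icc x y) := by
  obtain ⟨g, hg, c, C, hc, hC, hequiv⟩ := (hb.2.2 1 one_pos).2
  refine ⟨y * (C * g x), ?_⟩
  rintro _ ⟨τ, ⟨hxτ, hτy⟩, rfl⟩
  have hτ : 0 < τ := hx.trans_le hxτ
  have hbτ : τ⁻¹ * b τ ≤ C * g τ := by simpa [Real.rpow_neg_one] using (hequiv τ hτ).2
  have hpos : 0 < τ⁻¹ * b τ := mul_pos (inv_pos.mpr hτ) (hb.2.1 τ hτ)
  calc b τ = τ * (τ⁻¹ * b τ) := by field_simp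
    _ ≤ y * (C * g τ) := mul_le_mul hτy hbτ hpos.le (hτ.le.trans hτy)
    _ ≤ y * (C * g x) := by gcongr; exacts [hτ.le.trans hτy, hg hx hτ hxτ]

/-- `b` is bounded on `[x, 1]`, so `ν (x, 1] < ∞`. -/
theorem SlowlyVarying.brMeasure_Ioi_ne_top {b : ℝ → ℝ} (hb : SlowlyVarying b) {r : ℝ}
    (hr : 0 < r) (h1 : brMeasure b r (Ioi 1) ≠ ∞) {x : ℝ} (hx : 0 < x) :
    brMeasure b r (Ioi x) ≠ ∞ := by
  obtain ⟨M, hM⟩ := hb.bddAbove_image_Icc hx 1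
  have hIoc : brMeasure b r (Ioc x 1) ≤
      ENNReal.ofReal x⁻¹ * ENNReal.ofReal M ^ r * volume (Ioc x 1) := by
    rw [brMeasure, withDensity_apply _ measurableSet_Ioc, ← setLIntegral_const]
    refine setLIntegral_mono measurable_const fun τ hτ => ?_
    have hτ0 : 0 < τ := hx.trans hτ.1
    rw [brDensity_eq hr hτ0 (hb.2.1 τ hτ0).le]
    gcongr
    exacts [hτ.1.le, hM ⟨τ, Ioc_subset_Icc_self hτ, rfl⟩]
  refine ne_top_of_le_ne_top ?_ ((measure_mono (Ioi_subset_Ioc_union_Ioi (b := 1))).trans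
    (measure_union_le _ _))
  refine ENNReal.add_ne_top.mpr ⟨ne_top_of_le_ne_top ?_ hIoc, h1⟩
  exact ENNReal.mul_ne_top (ENNReal.mul_ne_top ENNReal.ofReal_ne_top
    (ENNReal.rpow_ne_top_of_nonneg hr.le ENNReal.ofReal_ne_top)) measure_Ioc_lt_top.ne

theorem CondC.brMeasure_Ioi_one_ne_top {b : ℝ → ℝ} {r : ℝ} (h : CondC b r) (hr : 0 < r) :
    brMeasure b r (Ioi 1) ≠ ∞ := by
  have : brF b r 1 ≠ ∞ := h.2
  rw [brF_eq] at this
  exact fun htop => this (by rw [htop, ENNReal.top_rpow_of_pos (by positivity)])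

section Weights

variable {b : ℝ → ℝ} {r p : ℝ} {n : ℕ}

theorem setLIntegral_Ioi_bbarF_weight_eq (hb : SlowlyVarying b)
    (hν : ∀ x, 0 < x → brMeasure b r (Ioi x) ≠ ∞) (hr : 0 < r) (hrp : r ≤ p) (hn : n ≠ 0)
    {y : ℝ} (hy : 0 < y) :
    ∫⁻ t in Ioi (y ^ n), ENNReal.ofReal (t ^ (-(1 / p)) * bbarF b r p (t ^ (n : ℝ)⁻¹)) ^ p =
      n * ∫⁻ u in Ioi y, brMeasure b r (Ioi u) ^ ((p - r) / r) ∂brMeasure b r := by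
  have hp : 0 < p := hr.trans_le hrp
  set c : ℝ → ℝ≥0∞ := fun u => brMeasure b r (Ioi u) ^ ((p - r) / r) * ENNReal.ofReal (b u) ^ r
  calc _ = ∫⁻ t in Ioi (y ^ n), ENNReal.ofReal t⁻¹ * c (t ^ (n : ℝ)⁻¹) := by
        refine setLIntegral_congr_fun measurableSet_Ioi fun t ht => ?_
        have ht0 : 0 < t := (pow_pos hy n).trans ht
        have hroot : 0 < t ^ (n : ℝ)⁻¹ := by positivity
        rw [ENNReal.ofReal_rpow_neg_one_div_mul_rpow ht0 hp,
          ofReal_bbarF_rpow hr hrp (hb.2.1 _ hroot).le (hν _ hroot)]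
    _ = n * ∫⁻ u in Ioi y, ENNReal.ofReal u⁻¹ * c u := setLIntegral_Ioi_pow_eq hn c hy
    _ = n * ∫⁻ u in Ioi y, brMeasure b r (Ioi u) ^ ((p - r) / r) ∂brMeasure b r := by
        have hbm := hb.1
        rw [brMeasure, setLIntegral_withDensity_eq_setLIntegral_mul _
          (by unfold brDensity; fun_prop) (antitone_measure_Ioi.measurable.pow_const _)
          measurableSet_Ioi]
        refine congrArg _ (setLIntegral_congr_fun measurableSet_Ioi fun u hu => ?_)
        have hu0 : 0 < u := hy.trans hu
        rw [Pi.mul_apply, brDensity_eq hr hu0 (hb.2.1 u hu0).le]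
        simp only [c, brMeasure]
        ring

theorem setLIntegral_Ioi_bbarF_weight_bounds (hb : SlowlyVarying b)
    (hν : ∀ x, 0 < x → brMeasure b r (Ioi x) ≠ ∞) (hr : 0 < r) (hrp : r ≤ p) (hn : n ≠ 0)
    {s : ℝ} (hs : 0 < s) :
    ENNReal.ofReal (n / 2 ^ (p / r)) * brMeasure b r (Ioi (s ^ (n : ℝ)⁻¹)) ^ (p / r) ≤
        ∫⁻ t in Ioi s, ENNReal.ofReal (t ^ (-(1 / p)) * bbarF b r p (t ^ (n : ℝ)⁻¹)) ^ p ∧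
      ∫⁻ t in Ioi s, ENNReal.ofReal (t ^ (-(1 / p)) * bbarF b r p (t ^ (n : ℝ)⁻¹)) ^ p ≤
        n * brMeasure b r (Ioi (s ^ (n : ℝ)⁻¹)) ^ (p / r) := by
  obtain ⟨y, hy, rfl⟩ : ∃ y, 0 < y ∧ y ^ n = s :=
    ⟨s ^ (n : ℝ)⁻¹, by positivity, Real.rpow_inv_natCast_pow hs.le hn⟩
  have hα : 0 ≤ (p - r) / r := div_nonneg (sub_nonneg.mpr hrp) hr.le
  have hα1 : (p - r) / r + 1 = p / r := by field_simp; ring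
  rw [Real.pow_rpow_inv_natCast hy.le hn, setLIntegral_Ioi_bbarF_weight_eq hb hν hr hrp hn hy,
    ← hα1]
  refine ⟨?_, by gcongr; exact setLIntegral_Ioi_measure_Ioi_rpow_le _ hα⟩
  calc _ = n * (brMeasure b r (Ioi y) / 2) ^ ((p - r) / r + 1) := by
        rw [ENNReal.div_rpow_of_nonneg _ _ (by positivity),
          ENNReal.ofReal_div_of_pos (by positivity), ENNReal.ofReal_natCast,
          ← ENNReal.ofReal_rpow_of_pos two_pos, ENNReal.ofReal_ofNat]
        simp only [div_eq_mul_inv]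
        ring
    _ ≤ _ := by gcongr; exact half_rpow_le_setLIntegral_Ioi_measure_Ioi_rpow hα (hν _ hy)

end Weights

/-- For `q = p` the quasinorms of `Z_{p,p,n,b̄}(ℝⁿ)` and `L_{p,p;b̃}(ℝⁿ)` are
equivalent. -/
theorem Z_eq_LK_of_q_eq_p (n : ℕ) (hn : 0 < n) (p r : ℝ)
    (hp1 : 1 < p) (hr : 1 ≤ r) (hrp : r ≤ p)
    (b : ℝ → ℝ) (hb : SlowlyVarying b) (hbC : CondC b r) :
    ∃ c C : ℝ, 0 < c ∧ 0 < C ∧ ∀ f : EuclideanSpace ℝ (Fin n) → ℝ, Measurable f →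
      ENNReal.ofReal c * LKnorm p p (btildeF b r p p n) f ≤ Znorm p p n (bbarF b r p) f ∧
      Znorm p p n (bbarF b r p) f ≤ ENNReal.ofReal C * LKnorm p p (btildeF b r p p n) f := by
  have hp : 0 < p := by linarith
  have hr0 : 0 < r := by linarith
  have hν (x : ℝ) (hx : 0 < x) : brMeasure b r (Ioi x) ≠ ∞ :=
    hb.brMeasure_Ioi_ne_top hr0 (hbC.brMeasure_Ioi_one_ne_top hr0) hx
  have hbounds (s : ℝ) (hs : s ∈ Ioi 0) :=
    setLIntegral_Ioi_bbarF_weight_bounds hb hν hr0 hrp hn.ne' hs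
  refine ⟨((n : ℝ) / 2 ^ (p / r)) ^ (1 / p), (n : ℝ) ^ (1 / p), by positivity, by positivity,
    fun f _ => ?_⟩
  have hLK (t : ℝ) (ht : t ∈ Ioi 0) :
      rearr f t ^ p * ENNReal.ofReal (btildeF b r p p n t) ^ p =
        rearr f t ^ p * brMeasure b r (Ioi (t ^ (n : ℝ)⁻¹)) ^ (p / r) := by
    rw [ofReal_btildeF_rpow hr0 (hν _ (Real.rpow_pos_of_pos ht _))]
  rw [Znorm_self_eq hp n (measurable_bbarF hb.1 r p), LKnorm_self_eq hp.le,
    setLIntegral_congr_fun measurableSet_Ioi hLK, ← ENNReal.ofReal_rpow_of_nonneg (by positivity)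
      (by positivity), ← ENNReal.ofReal_rpow_of_nonneg (by positivity) (by positivity),
    ENNReal.ofReal_natCast]
  constructor
  · simpa only [ENNReal.one_rpow, one_mul] using
      rpow_setLIntegral_le_of_mul_le measurableSet_Ioi ENNReal.ofReal_ne_top ENNReal.one_ne_top
        (fun s hs => by rw [one_mul, mul_left_comm]; gcongr; exact (hbounds s hs).1)
        (by positivity : 0 ≤ 1 / p)
  · simpa only [ENNReal.one_rpow, one_mul] using
      rpow_setLIntegral_le_of_mul_le measurableSet_Ioi ENNReal.one_ne_top (ENNReal.natCast_ne_top n)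
        (fun s hs => by rw [one_mul, mul_left_comm]; gcongr; exact (hbounds s hs).2)
        (by positivity : 0 ≤ 1 / p)

end
end

section
/- Let n ∈ ℕ, 1 ≤ p < ∞, 1 ≤ r ≤ q < ∞, and let b ∈ SV(0,∞) satisfy ‖t^{-1/r} b(t)‖_{r;(1,∞)} < ∞ (so that b_r(t) < ∞ for all t > 0). Set b̄ = b̄_{(r,q)}. Then there exists a constant C > 0 such that for every f ∈ L_p(ℝ^n): ‖f‖_{L_p(ℝ^n)} + ‖t^{-1/q} b̄(t) ω₁(f,t)_p‖_{q;(0,∞)} ≤ C ( ‖f‖_{L_p(ℝ^n)} + ‖t^{-1/r} b(t) ω₁(f,t)_p‖_{r;(0,∞)} ), i.e. B^{0,b}_{p,r}(ℝ^n) is continuously embedded into B^{0,b̄}_{p,q}(ℝ^n). -/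
open MeasureTheory Set Filter
open scoped ENNReal NNReal Topology

noncomputable section

/-!
Write `u(τ) = τ^{-1/r} b(τ)` and `N = ‖u ω₁(f,·)_p‖_{r;(0,∞)}`. Since `ω₁(f,·)_p` is
non-decreasing, `b_r(t) ω₁(f,t)_p ≤ ‖u ω₁(f,·)_p‖_{r;(t,∞)} ≤ N`. The `q`-th power of
`t^{-1/q} b̄(t) ω₁(f,t)_p` is `(b_r(t) ω₁(f,t)_p)^{q-r} (u(t) ω₁(f,t)_p)^r ≤ N^{q-r} (u(t) ω₁(f,t)_p)^r`,
and integrating gives the embedding with constant `1`.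
-/

theorem smoothMod_mono {n : ℕ} (p : ℝ) (f : EuclideanSpace ℝ (Fin n) → ℝ) :
    Monotone (smoothMod p f) := fun _ _ hst =>
  iSup_mono fun _ => iSup_le fun hh => le_iSup_of_le (hh.trans hst) le_rfl

theorem eLq_rpow {g : ℝ → ℝ≥0∞} {q : ℝ} (hq : 0 < q) (s : Set ℝ) :
    eLq g q s ^ q = ∫⁻ t in s, g t ^ q := by
  rw [eLq, ← ENNReal.rpow_mul, one_div_mul_cancel hq.ne', ENNReal.rpow_one]

theorem eLq_Ioi_mul_le_of_monotone {u ω : ℝ → ℝ≥0∞} {r a t : ℝ} (hr : 0 < r)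
    (hω : Monotone ω) (hat : a ≤ t) :
    eLq u r (Ioi t) * ω t ≤ eLq (fun τ => u τ * ω τ) r (Ioi a) := by
  rw [← ENNReal.rpow_le_rpow_iff hr, ENNReal.mul_rpow_of_nonneg _ _ hr.le, eLq_rpow hr,
    eLq_rpow hr]
  calc (∫⁻ τ in Ioi t, u τ ^ r) * ω t ^ r
      ≤ ∫⁻ τ in Ioi t, u τ ^ r * ω t ^ r := lintegral_mul_const_le _ _
    _ ≤ ∫⁻ τ in Ioi t, (u τ * ω τ) ^ r := by
        refine setLIntegral_mono' measurableSet_Ioi fun τ hτ => ?_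
        rw [ENNReal.mul_rpow_of_nonneg _ _ hr.le]
        gcongr
        exact hω (le_of_lt hτ)
    _ ≤ ∫⁻ τ in Ioi a, (u τ * ω τ) ^ r := lintegral_mono_set (Ioi_subset_Ioi hat)

theorem eLq_Ioi_mul_le_of_rpow_le {u φ ω : ℝ → ℝ≥0∞} {r q a : ℝ} (hr : 0 < r) (hrq : r ≤ q)
    (hω : Monotone ω) (hφ : ∀ t ∈ Ioi a, φ t ^ q ≤ eLq u r (Ioi t) ^ (q - r) * u t ^ r) :
    eLq (fun t => φ t * ω t) q (Ioi a) ≤ eLq (fun t => u t * ω t) r (Ioi a) := by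
  set N := eLq (fun t => u t * ω t) r (Ioi a)
  have hq : 0 < q := hr.trans_le hrq
  have hqr : 0 ≤ q - r := sub_nonneg.mpr hrq
  rcases eq_or_ne N ⊤ with hN | hN
  · exact hN ▸ le_top
  rw [← ENNReal.rpow_le_rpow_iff hq, eLq_rpow hq]
  calc ∫⁻ t in Ioi a, (φ t * ω t) ^ q
      ≤ ∫⁻ t in Ioi a, (eLq u r (Ioi t) * ω t) ^ (q - r) * (u t * ω t) ^ r := by
        refine setLIntegral_mono' measurableSet_Ioi fun t ht => ?_
        have hω_split : ω t ^ q = ω t ^ (q - r) * ω t ^ r := by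
          rw [← ENNReal.rpow_add_of_nonneg _ _ hqr hr.le, sub_add_cancel]
        calc (φ t * ω t) ^ q = φ t ^ q * ω t ^ q := ENNReal.mul_rpow_of_nonneg _ _ hq.le
          _ ≤ eLq u r (Ioi t) ^ (q - r) * u t ^ r * (ω t ^ (q - r) * ω t ^ r) := by
              rw [← hω_split]; gcongr; exact hφ t ht
          _ = _ := by
              rw [ENNReal.mul_rpow_of_nonneg _ _ hqr, ENNReal.mul_rpow_of_nonneg _ _ hr.le]
              ring
    _ ≤ ∫⁻ t in Ioi a, N ^ (q - r) * (u t * ω t) ^ r := by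
        refine setLIntegral_mono' measurableSet_Ioi fun t ht => ?_
        gcongr
        exact eLq_Ioi_mul_le_of_monotone hr hω (le_of_lt ht)
    _ = N ^ (q - r) * N ^ r := by
        rw [lintegral_const_mul' _ _ (ENNReal.rpow_ne_top_of_nonneg hqr hN), eLq_rpow hr]
    _ = N ^ q := by rw [← ENNReal.rpow_add_of_nonneg _ _ hqr hr.le, sub_add_cancel]

theorem rpow_neg_inv_mul_interpolation_rpow (x W B : ℝ≥0∞) {r q : ℝ} (hr : 0 < r)
    (hq : 0 < q) :
    (x ^ (-(1 / q)) * (W ^ (1 - r / q) * B ^ (r / q))) ^ q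
      = W ^ (q - r) * (x ^ (-(1 / r)) * B) ^ r := by
  have e1 : -(1 / q) * q = -1 := by field_simp
  have e2 : (1 - r / q) * q = q - r := by field_simp
  have e3 : r / q * q = r := by field_simp
  have e4 : -(1 / r) * r = -1 := by field_simp
  rw [ENNReal.mul_rpow_of_nonneg _ _ hq.le, ENNReal.mul_rpow_of_nonneg _ _ hq.le,
    ENNReal.mul_rpow_of_nonneg _ _ hr.le, ← ENNReal.rpow_mul, ← ENNReal.rpow_mul,
    ← ENNReal.rpow_mul, ← ENNReal.rpow_mul, e1, e2, e3, e4]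
  ring

theorem brF_eq_eLq {b : ℝ → ℝ} (hb : ∀ τ ∈ Ioi (0 : ℝ), 0 ≤ b τ) (r : ℝ) {t : ℝ}
    (ht : 0 ≤ t) :
    brF b r t = eLq (fun τ => ENNReal.ofReal (τ ^ (-(1 / r)) * b τ)) r (Ioi t) := by
  refine congrArg (· ^ (1 / r)) (setLIntegral_congr_fun measurableSet_Ioi fun τ hτ => ?_)
  have hτ : 0 < τ := ht.trans_lt hτ
  simp only [abs_of_nonneg (mul_nonneg (Real.rpow_nonneg hτ.le _) (hb τ hτ))]

/-- Only an inequality: where `b_r(t) = ∞`, `toReal` turns it into `0` inside `bbarF`. -/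
theorem ofReal_bbarF_le {b : ℝ → ℝ} {r q t : ℝ} (hb : 0 ≤ b t) (hrq : 0 ≤ r / q) :
    ENNReal.ofReal (bbarF b r q t)
      ≤ brF b r t ^ (1 - r / q) * ENNReal.ofReal (b t) ^ (r / q) := by
  rw [bbarF, ENNReal.toReal_rpow, ENNReal.ofReal_mul ENNReal.toReal_nonneg,
    ENNReal.ofReal_rpow_of_nonneg hb hrq]
  gcongr
  exact ENNReal.ofReal_toReal_le

theorem ofReal_bbarF_weight_rpow_le {b : ℝ → ℝ} {r q t : ℝ} (hr : 0 < r) (hrq : r ≤ q)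
    (hb : 0 ≤ b t) (ht : 0 < t) :
    ENNReal.ofReal (t ^ (-(1 / q)) * bbarF b r q t) ^ q
      ≤ brF b r t ^ (q - r) * ENNReal.ofReal (t ^ (-(1 / r)) * b t) ^ r := by
  have hq : 0 < q := hr.trans_le hrq
  rw [ENNReal.ofReal_mul (Real.rpow_pos_of_pos ht _).le, ← ENNReal.ofReal_rpow_of_pos ht,
    ENNReal.ofReal_mul (Real.rpow_pos_of_pos ht _).le, ← ENNReal.ofReal_rpow_of_pos ht,
    ← rpow_neg_inv_mul_interpolation_rpow _ _ _ hr hq]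
  gcongr
  exact ofReal_bbarF_le hb (div_nonneg hr.le hq.le)

theorem besov_embed_besov_general (n : ℕ) (p r q : ℝ)
    (hr : 1 ≤ r) (hrq : r ≤ q)
    (b : ℝ → ℝ) (hb : SlowlyVarying b) :
    ∃ C : ℝ, 0 < C ∧ ∀ f : EuclideanSpace ℝ (Fin n) → ℝ,
      MemLp f (ENNReal.ofReal p) volume →
      besovNorm p q (bbarF b r q) f ≤ ENNReal.ofReal C * besovNorm p r b f := by
  have hr0 : 0 < r := one_pos.trans_le hr
  have hb0 : ∀ t ∈ Ioi (0 : ℝ), 0 ≤ b t := fun t ht => (hb.2.1 t ht).le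
  refine ⟨1, one_pos, fun f _ => ?_⟩
  rw [ENNReal.ofReal_one, one_mul]
  refine add_le_add le_rfl (eLq_Ioi_mul_le_of_rpow_le hr0 hrq (smoothMod_mono p f) ?_)
  intro t ht
  rw [← brF_eq_eLq hb0 r (le_of_lt ht)]
  exact ofReal_bbarF_weight_rpow_le hr0 hrq (hb0 t ht) ht

/-- `B^{0,b}_{p,r}(ℝⁿ) ↪ B^{0,b̄_{(r,q)}}_{p,q}(ℝⁿ)` for `1 ≤ r ≤ q < ∞`. -/
theorem besov_embed_besov (n : ℕ) (hn : 0 < n) (p r q : ℝ)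
    (hp1 : 1 ≤ p) (hr : 1 ≤ r) (hrq : r ≤ q)
    (b : ℝ → ℝ) (hb : SlowlyVarying b)
    (hbr : eLqR (fun t => t ^ (-(1 / r)) * b t) r (Ioi 1) ≠ ∞) :
    ∃ C : ℝ, 0 < C ∧ ∀ f : EuclideanSpace ℝ (Fin n) → ℝ,
      MemLp f (ENNReal.ofReal p) volume →
      besovNorm p q (bbarF b r q) f ≤ ENNReal.ofReal C * besovNorm p r b f :=
  besov_embed_besov_general n p r q hr hrq b hb

end
end

section
/- Let θ ∈ [0,1), 0 < r, q < ∞, and let a, b ∈ SV(0,∞) satisfy ∫_1^∞ y^{-1} (b(y)/a(y))^r dy < ∞. Define d(x) := b(x) · ( [∫_x^∞ y^{-1} (b(y)/a(y))^r dy] / (b(x)/a(x))^r )^{1/max{q,r}} for x ∈ (0,∞). Then there exists a constant C > 0 such that for every measurable function k : (0,∞) → [0,∞] with t ↦ k(t)/t non-increasing on (0,∞): ‖ t^{-θ-1/r} d(t) k(t) ‖_{r;(0,∞)} ≤ C ‖ t^{-1/r} (b(t)/a(t)) ‖ τ^{-θ-1/q} a(τ) k(τ) ‖_{q;(0,t)}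 ‖_{r;(0,∞)}. -/
open MeasureTheory Set Filter
open scoped ENNReal NNReal Topology

noncomputable section

/-!
Write `g = (τ^{-θ-1/q} a k)^q`, `Φ(t) = ∫_0^t g`, `ψ(y) = y⁻¹ (b(y)/a(y))^r`,
`B(t) = ∫_t^∞ ψ` and `p = r/q`. The `r`-th power of the right-hand side is `∫ ψ Φ^p`, and by
Fubini `∫ g Φ^{p-1} B = ∫ ψ(s) ∫_0^s Φ^{p-1} dΦ ds`, where `∫_0^s Φ^{p-1} dΦ ≤ max(1, 1/p) Φ(s)^p`.
With `s = r / max(q,r)`, the `r`-th power of the left integrand is `(t g)^{p-s} (g B)^s ψ^{1-s}`.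
If `q ≤ r`, then `s = 1`, and since `k(t)/t` is non-increasing and `a` is slowly varying,
`t g(t) ≲ ∫_{t/2}^t g ≤ Φ(t)`; so the integrand is `≲ g Φ^{p-1} B`.
If `r < q`, then `s = p` and the integrand is the geometric mean
`(g Φ^{p-1} B)^p (ψ Φ^p)^{1-p}`, so Hölder's inequality concludes.
-/

theorem lintegral_Ioi_one_sub_mul_rpow_sub_two {p c : ℝ} (hp1 : p < 1) (hc : 0 < c) :
    ∫⁻ x in Ioi c, ENNReal.ofReal ((1 - p) * x ^ (p - 2)) = ENNReal.ofReal (c ^ (p - 1)) := by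
  rw [← ofReal_integral_eq_lintegral_ofReal
      ((integrableOn_Ioi_rpow_of_lt (by linarith) hc).const_mul _)
      (ae_restrict_of_forall_mem measurableSet_Ioi fun x hx =>
        mul_nonneg (by linarith) (Real.rpow_nonneg (hc.trans hx).le _)),
    integral_const_mul, integral_Ioi_rpow_of_lt (by linarith) hc,
    show p - 2 + 1 = p - 1 by ring]
  congr 1
  field_simp [show p - 1 ≠ 0 by linarith]
  ring

theorem lintegral_Ioi_one_sub_mul_rpow_sub_two_mul_min {p y : ℝ} (hp0 : 0 < p) (hp1 : p < 1)
    (hy : 0 < y) :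
    ∫⁻ x in Ioi 0, ENNReal.ofReal ((1 - p) * x ^ (p - 2)) *
      min (ENNReal.ofReal x) (ENNReal.ofReal y) = ENNReal.ofReal (y ^ p / p) := by
  have hnonneg : ∀ e : ℝ, ∀ x ∈ Ioi (0 : ℝ), 0 ≤ (1 - p) * x ^ e := fun e x hx =>
    mul_nonneg (by linarith) (Real.rpow_nonneg (le_of_lt hx) e)
  have hnear : ∫⁻ x in Ioc 0 y, ENNReal.ofReal ((1 - p) * x ^ (p - 2)) * ENNReal.ofReal x =
      ENNReal.ofReal ((1 - p) * (y ^ p / p)) := by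
    have hint : IntegrableOn (fun x : ℝ => (1 - p) * x ^ (p - 1)) (Ioc 0 y) :=
      ((intervalIntegrable_iff_integrableOn_Ioc_of_le hy.le).1
        (intervalIntegral.intervalIntegrable_rpow' (by linarith))).const_mul _
    calc ∫⁻ x in Ioc 0 y, ENNReal.ofReal ((1 - p) * x ^ (p - 2)) * ENNReal.ofReal x
        = ∫⁻ x in Ioc 0 y, ENNReal.ofReal ((1 - p) * x ^ (p - 1)) := by
          refine setLIntegral_congr_fun measurableSet_Ioc fun x hx => ?_
          rw [← ENNReal.ofReal_mul (hnonneg _ x hx.1), mul_assoc,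
            ← Real.rpow_add_one hx.1.ne']
          ring_nf
      _ = ENNReal.ofReal (∫ x in Ioc 0 y, (1 - p) * x ^ (p - 1)) :=
          (ofReal_integral_eq_lintegral_ofReal hint (ae_restrict_of_forall_mem
            measurableSet_Ioc fun x hx => hnonneg (p - 1) x hx.1)).symm
      _ = ENNReal.ofReal ((1 - p) * (y ^ p / p)) := by
          rw [integral_const_mul, ← intervalIntegral.integral_of_le hy.le,
            integral_rpow (Or.inl (by linarith))]
          simp [Real.zero_rpow hp0.ne']
  have hfar : ∫⁻ x in Ioi y, ENNReal.ofReal ((1 - p) * x ^ (p - 2)) * ENNReal.ofReal y =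
      ENNReal.ofReal (y ^ p) := by
    rw [lintegral_mul_const' _ _ ENNReal.ofReal_ne_top,
      lintegral_Ioi_one_sub_mul_rpow_sub_two hp1 hy, ← ENNReal.ofReal_mul (by positivity),
      ← Real.rpow_add_one hy.ne', sub_add_cancel]
  rw [← Ioc_union_Ioi_eq_Ioi hy.le, lintegral_union measurableSet_Ioi (Ioc_disjoint_Ioi le_rfl),
    setLIntegral_congr_fun measurableSet_Ioc fun x hx =>
      congrArg _ (min_eq_left (ENNReal.ofReal_le_ofReal hx.2)),
    setLIntegral_congr_fun measurableSet_Ioi fun x hx =>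
      congrArg _ (min_eq_right (ENNReal.ofReal_le_ofReal (le_of_lt hx))),
    hnear, hfar, ← ENNReal.ofReal_add (mul_nonneg (by linarith) (by positivity)) (by positivity)]
  congr 1
  field_simp
  ring

theorem measure_Ioo_inter_setOf_measure_Ioo_lt_le (ν : Measure ℝ) [NullSingletonClass ν]
    (s : ℝ) (X : ℝ≥0∞) : ν (Ioo 0 s ∩ {t | ν (Ioo 0 t) < X}) ≤ X := by
  set E := Ioo 0 s ∩ {t | ν (Ioo 0 t) < X}
  rcases E.eq_empty_or_nonempty with hE | hE
  · simp [hE]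
  have hbdd : BddAbove E := bddAbove_Ioo.mono inter_subset_left
  obtain ⟨u, hu_mono, hu_lim, huE⟩ := exists_seq_tendsto_sSup hE hbdd
  have hsub : E ⊆ (⋃ n, Ioo 0 (u n)) ∪ {sSup E} := by
    intro t ht
    rcases (le_csSup hbdd ht).lt_or_eq with h | h
    · obtain ⟨n, hn⟩ := (hu_lim.eventually (lt_mem_nhds h)).exists
      exact Or.inl (mem_iUnion.2 ⟨n, ht.1.1, hn⟩)
    · exact Or.inr h
  calc ν E ≤ ν (⋃ n, Ioo 0 (u n)) + ν {sSup E} :=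
        (measure_mono hsub).trans (measure_union_le _ _)
    _ = ⨆ n, ν (Ioo 0 (u n)) := by
        rw [measure_singleton, add_zero,
          Monotone.measure_iUnion fun m n h => Ioo_subset_Ioo_right (hu_mono h)]
    _ ≤ X := iSup_le fun n => (huE n).2.le

theorem ae_restrict_Ioo_measure_Ioo_ne_zero (ν : Measure ℝ) [NullSingletonClass ν] (s : ℝ) :
    ∀ᵐ t ∂ν.restrict (Ioo 0 s), ν (Ioo 0 t) ≠ 0 := by
  rw [ae_iff, Measure.restrict_apply' measurableSet_Ioo, ← nonpos_iff_eq_zero]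
  refine ENNReal.le_of_forall_pos_le_add fun ε hε _ => ?_
  calc ν ({t | ¬ν (Ioo 0 t) ≠ 0} ∩ Ioo 0 s) ≤ ν (Ioo 0 s ∩ {t | ν (Ioo 0 t) < ε}) :=
        measure_mono fun t ht => ⟨ht.2, by simpa [not_not.1 ht.1] using hε⟩
    _ ≤ 0 + ε := (measure_Ioo_inter_setOf_measure_Ioo_lt_le ν s ε).trans le_add_self

theorem rpow_sub_one_eq_setLIntegral_indicator {p : ℝ} (hp1 : p < 1) {c : ℝ≥0∞} (hc0 : c ≠ 0)
    (hc : c ≠ ⊤) :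
    c ^ (p - 1) = ∫⁻ x in Ioi 0,
      {x | c < ENNReal.ofReal x}.indicator (fun x => ENNReal.ofReal ((1 - p) * x ^ (p - 2))) x := by
  have hc' : 0 < c.toReal := ENNReal.toReal_pos hc0 hc
  have hIoi : {x | c < ENNReal.ofReal x} = Ioi c.toReal := by
    ext x
    simp [ENNReal.lt_ofReal_iff_toReal_lt hc]
  rw [hIoi, setLIntegral_indicator measurableSet_Ioi, inter_eq_left.2 (Ioi_subset_Ioi hc'.le),
    lintegral_Ioi_one_sub_mul_rpow_sub_two hp1 hc', ← ENNReal.ofReal_rpow_of_pos hc',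
    ENNReal.ofReal_toReal hc]

-- Layer cake: `Φ(t)^{p-1} = ∫_{x > Φ(t)} (1-p) x^{p-2} dx` for `Φ(t) = ν(0,t)`; after swapping
-- the integrals, the slice `{t < s | Φ(t) < x}` has `ν`-measure at most `min(x, Φ(s))`.
theorem setLIntegral_measure_Ioo_rpow_sub_one_le (ν : Measure ℝ) [NullSingletonClass ν] {p : ℝ}
    (hp0 : 0 < p) (hp1 : p < 1) (s : ℝ) :
    ∫⁻ t in Ioo 0 s, ν (Ioo 0 t) ^ (p - 1) ∂ν ≤ ENNReal.ofReal (1 / p) * ν (Ioo 0 s) ^ p := by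
  set Y := ν (Ioo 0 s)
  rcases eq_top_or_lt_top Y with hYtop | hYtop
  · rw [hYtop, ENNReal.top_rpow_of_pos hp0, ENNReal.mul_top (by simpa using hp0)]
    exact le_top
  rcases eq_or_ne Y 0 with hY0 | hY0
  · rw [setLIntegral_measure_zero _ _ hY0]
    exact zero_le
  have : IsFiniteMeasure (ν.restrict (Ioo 0 s)) := isFiniteMeasure_restrict.2 hYtop.ne
  have hΦ : Measurable fun t => ν (Ioo 0 t) :=
    Monotone.measurable fun _ _ h => measure_mono (Ioo_subset_Ioo_right h)
  set W : ℝ → ℝ≥0∞ := fun x => ENNReal.ofReal ((1 - p) * x ^ (p - 2))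
  have hslice : ∀ x, ∫⁻ t in Ioo 0 s, {x | ν (Ioo 0 t) < ENNReal.ofReal x}.indicator W x ∂ν ≤
      W x * min (ENNReal.ofReal x) (ENNReal.ofReal Y.toReal) := by
    intro x
    have hx : MeasurableSet {t | ν (Ioo 0 t) < ENNReal.ofReal x} :=
      measurableSet_lt hΦ measurable_const
    calc ∫⁻ t in Ioo 0 s, {x | ν (Ioo 0 t) < ENNReal.ofReal x}.indicator W x ∂ν
        = ∫⁻ t in Ioo 0 s, {t | ν (Ioo 0 t) < ENNReal.ofReal x}.indicator (fun _ => W x) t ∂ν :=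
          rfl
      _ = W x * ν (Ioo 0 s ∩ {t | ν (Ioo 0 t) < ENNReal.ofReal x}) := by
          rw [lintegral_indicator_const hx, Measure.restrict_apply hx, inter_comm]
      _ ≤ W x * min (ENNReal.ofReal x) (ENNReal.ofReal Y.toReal) := by
          rw [ENNReal.ofReal_toReal hYtop.ne]
          exact mul_le_mul_right (le_min (measure_Ioo_inter_setOf_measure_Ioo_lt_le ν s _)
            (measure_mono inter_subset_left)) _
  have hy := ENNReal.toReal_pos hY0 hYtop.ne
  calc ∫⁻ t in Ioo 0 s, ν (Ioo 0 t) ^ (p - 1) ∂ν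
      = ∫⁻ t in Ioo 0 s,
          (∫⁻ x in Ioi 0, {x | ν (Ioo 0 t) < ENNReal.ofReal x}.indicator W x) ∂ν := by
        refine lintegral_congr_ae ?_
        filter_upwards [ae_restrict_Ioo_measure_Ioo_ne_zero ν s,
          ae_restrict_mem measurableSet_Ioo] with t ht0 hts
        exact rpow_sub_one_eq_setLIntegral_indicator hp1 ht0
          (ne_top_of_le_ne_top hYtop.ne (measure_mono (Ioo_subset_Ioo_right hts.2.le)))
    _ = ∫⁻ x in Ioi 0, ∫⁻ t in Ioo 0 s, {x | ν (Ioo 0 t) < ENNReal.ofReal x}.indicator W x ∂ν :=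
        lintegral_lintegral_swap (((by fun_prop : Measurable W).comp measurable_snd).indicator
          (measurableSet_lt (hΦ.comp measurable_fst)
            (ENNReal.measurable_ofReal.comp measurable_snd))).aemeasurable
    _ ≤ ∫⁻ x in Ioi 0, W x * min (ENNReal.ofReal x) (ENNReal.ofReal Y.toReal) :=
        lintegral_mono hslice
    _ = ENNReal.ofReal (1 / p) * Y ^ p := by
        rw [lintegral_Ioi_one_sub_mul_rpow_sub_two_mul_min hp0 hp1 hy]
        conv_rhs => rw [← ENNReal.ofReal_toReal hYtop.ne, ENNReal.ofReal_rpow_of_pos hy,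
          ← ENNReal.ofReal_mul (by positivity), one_div_mul_eq_div]

theorem measurable_setLIntegral_Ioo (g : ℝ → ℝ≥0∞) :
    Measurable fun t => ∫⁻ τ in Ioo 0 t, g τ :=
  Monotone.measurable fun _ _ h => lintegral_mono_set (Ioo_subset_Ioo_right h)

theorem setLIntegral_rpow_sub_one_mul_le_of_lt_one {g : ℝ → ℝ≥0∞} (hg : Measurable g) {p : ℝ}
    (hp0 : 0 < p) (hp1 : p < 1) (s : ℝ) :
    ∫⁻ t in Ioo 0 s, (∫⁻ τ in Ioo 0 t, g τ) ^ (p - 1) * g t ≤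
      ENNReal.ofReal (1 / p) * (∫⁻ τ in Ioo 0 s, g τ) ^ p := by
  set ν := volume.withDensity g
  have : NullSingletonClass ν :=
    ⟨fun x => by simp [ν, withDensity_apply _ (measurableSet_singleton x)]⟩
  have hν : ∀ t, ∫⁻ τ in Ioo 0 t, g τ = ν (Ioo 0 t) := fun t =>
    (withDensity_apply _ measurableSet_Ioo).symm
  have hΦ : Measurable fun t => ν (Ioo 0 t) := by
    simpa only [hν] using measurable_setLIntegral_Ioo g
  simp only [hν]
  convert setLIntegral_measure_Ioo_rpow_sub_one_le ν hp0 hp1 s using 1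
  rw [restrict_withDensity measurableSet_Ioo,
    lintegral_withDensity_eq_lintegral_mul _ hg (hΦ.pow_const _)]
  simp only [Pi.mul_apply, mul_comm]

theorem setLIntegral_rpow_sub_one_mul_le_of_one_le {g : ℝ → ℝ≥0∞} (hg : Measurable g) {p : ℝ}
    (hp : 1 ≤ p) (s : ℝ) :
    ∫⁻ t in Ioo 0 s, (∫⁻ τ in Ioo 0 t, g τ) ^ (p - 1) * g t ≤ (∫⁻ τ in Ioo 0 s, g τ) ^ p :=
  calc ∫⁻ t in Ioo 0 s, (∫⁻ τ in Ioo 0 t, g τ) ^ (p - 1) * g t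
      ≤ ∫⁻ t in Ioo 0 s, (∫⁻ τ in Ioo 0 s, g τ) ^ (p - 1) * g t :=
        setLIntegral_mono' measurableSet_Ioo fun t ht => mul_le_mul_left (ENNReal.rpow_le_rpow
          (lintegral_mono_set (Ioo_subset_Ioo_right ht.2.le)) (by linarith)) _
    _ = (∫⁻ τ in Ioo 0 s, g τ) ^ p := by
        rw [lintegral_const_mul _ hg]
        conv_rhs => rw [← sub_add_cancel p 1, ENNReal.rpow_add_of_nonneg _ _ (by linarith)
          zero_le_one, ENNReal.rpow_one]

theorem lintegral_mul_lintegral_Ioi_eq {W ψ : ℝ → ℝ≥0∞} (hW : Measurable W)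
    (hψ : Measurable ψ) :
    ∫⁻ t in Ioi 0, W t * ∫⁻ s in Ioi t, ψ s = ∫⁻ s in Ioi 0, ψ s * ∫⁻ t in Ioo 0 s, W t := by
  set F : ℝ × ℝ → ℝ≥0∞ := {z | z.1 < z.2}.indicator fun z => W z.1 * ψ z.2
  have hF : Measurable F := ((hW.comp measurable_fst).mul (hψ.comp measurable_snd)).indicator
    (measurableSet_lt measurable_fst measurable_snd)
  calc ∫⁻ t in Ioi 0, W t * ∫⁻ s in Ioi t, ψ s
      = ∫⁻ t in Ioi 0, ∫⁻ s in Ioi 0, F (t, s) := by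
        refine setLIntegral_congr_fun measurableSet_Ioi fun t ht => ?_
        have hFt : ∀ s, F (t, s) = (Ioi t).indicator (fun s => W t * ψ s) s := fun s => by
          simp only [F, indicator, mem_ofPred_eq, mem_Ioi]
        simp only [hFt]
        rw [setLIntegral_indicator measurableSet_Ioi,
          inter_eq_left.2 (Ioi_subset_Ioi (le_of_lt ht)), lintegral_const_mul _ hψ]
    _ = ∫⁻ s in Ioi 0, ∫⁻ t in Ioi 0, F (t, s) := lintegral_lintegral_swap hF.aemeasurable
    _ = ∫⁻ s in Ioi 0, ψ s * ∫⁻ t in Ioo 0 s, W t := by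
        refine setLIntegral_congr_fun measurableSet_Ioi fun s _ => ?_
        have hFs : ∀ t, F (t, s) = (Iio s).indicator (fun t => ψ s * W t) t := fun t => by
          simp only [F, indicator, mem_ofPred_eq, mem_Iio, mul_comm]
        simp only [hFs]
        rw [setLIntegral_indicator measurableSet_Iio, inter_comm, Ioi_inter_Iio,
          lintegral_const_mul _ hW]

theorem lintegral_rpow_sub_one_mul_mul_lintegral_Ioi_le {g ψ : ℝ → ℝ≥0∞} (hg : Measurable g)
    (hψ : Measurable ψ) {p : ℝ} {C : ℝ≥0∞}
    (h : ∀ s, ∫⁻ t in Ioo 0 s, (∫⁻ τ in Ioo 0 t, g τ) ^ (p - 1) * g t ≤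
      C * (∫⁻ τ in Ioo 0 s, g τ) ^ p) :
    ∫⁻ t in Ioi 0, (∫⁻ τ in Ioo 0 t, g τ) ^ (p - 1) * g t * ∫⁻ s in Ioi t, ψ s ≤
      C * ∫⁻ s in Ioi 0, ψ s * (∫⁻ τ in Ioo 0 s, g τ) ^ p := by
  have hΦ := measurable_setLIntegral_Ioo g
  calc _ = ∫⁻ s in Ioi 0, ψ s * ∫⁻ t in Ioo 0 s, (∫⁻ τ in Ioo 0 t, g τ) ^ (p - 1) * g t :=
        lintegral_mul_lintegral_Ioi_eq ((hΦ.pow_const _).mul hg) hψ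
    _ ≤ ∫⁻ s in Ioi 0, ψ s * (C * (∫⁻ τ in Ioo 0 s, g τ) ^ p) :=
        lintegral_mono fun s => mul_le_mul_right (h s) _
    _ = C * ∫⁻ s in Ioi 0, ψ s * (∫⁻ τ in Ioo 0 s, g τ) ^ p := by
        simp_rw [mul_left_comm (ψ _)]
        exact lintegral_const_mul C (hψ.mul (hΦ.pow_const p))

theorem lintegral_rpow_mul_rpow_one_sub_le {α : Type*} [MeasurableSpace α] (μ : Measure α)
    {f g : α → ℝ≥0∞} (hf : AEMeasurable f μ) (hg : AEMeasurable g μ) {p : ℝ}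
    (hp0 : 0 < p) (hp1 : p < 1) :
    ∫⁻ x, f x ^ p * g x ^ (1 - p) ∂μ ≤ (∫⁻ x, f x ∂μ) ^ p * (∫⁻ x, g x ∂μ) ^ (1 - p) := by
  have hpq : (1 / p).HolderConjugate (1 / (1 - p)) := by
    rw [Real.holderConjugate_iff]
    exact ⟨by rw [lt_div_iff₀ hp0]; linarith, by field_simp; ring⟩
  have hinv : ∀ (x : ℝ≥0∞) {e : ℝ}, e ≠ 0 → (x ^ e) ^ (1 / e) = x := fun x e he => by
    rw [← ENNReal.rpow_mul, mul_one_div_cancel he, ENNReal.rpow_one]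
  have h := ENNReal.lintegral_mul_le_Lp_mul_Lq μ hpq (hf.pow_const p) (hg.pow_const (1 - p))
  simpa only [Pi.mul_apply, hinv _ hp0.ne', hinv _ (sub_pos.2 hp1).ne', one_div_one_div] using h

theorem ENNReal.weighted_geom_mean_cancel {x y z : ℝ≥0∞} (hz0 : z ≠ 0) (hz : z ≠ ⊤)
    {p : ℝ} (hp0 : 0 ≤ p) (hp1 : p ≤ 1) :
    (z ^ (p - 1) * x) ^ p * (y * z ^ p) ^ (1 - p) = x ^ p * y ^ (1 - p) := by
  rw [ENNReal.mul_rpow_of_nonneg _ _ hp0, ENNReal.mul_rpow_of_nonneg _ _ (sub_nonneg.2 hp1),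
    ← ENNReal.rpow_mul, ← ENNReal.rpow_mul]
  calc z ^ ((p - 1) * p) * x ^ p * (y ^ (1 - p) * z ^ (p * (1 - p)))
      = z ^ ((p - 1) * p + p * (1 - p)) * (x ^ p * y ^ (1 - p)) := by
        rw [ENNReal.rpow_add _ _ hz0 hz]
        ring
    _ = x ^ p * y ^ (1 - p) := by
        rw [show (p - 1) * p + p * (1 - p) = 0 by ring, ENNReal.rpow_zero, one_mul]

theorem lintegral_rpow_mul_tail_le_of_one_le {g ψ : ℝ → ℝ≥0∞} (hg : Measurable g)
    (hψ : Measurable ψ) {p K : ℝ} (hp : 1 ≤ p) (hK0 : 0 ≤ K)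
    (hK : ∀ t ∈ Ioi 0, ENNReal.ofReal t * g t ≤ ENNReal.ofReal K * ∫⁻ τ in Ioo 0 t, g τ) :
    ∫⁻ t in Ioi 0, (ENNReal.ofReal t * g t) ^ (p - 1) * (g t * ∫⁻ s in Ioi t, ψ s) ≤
      ENNReal.ofReal (K ^ (p - 1)) * ∫⁻ s in Ioi 0, ψ s * (∫⁻ τ in Ioo 0 s, g τ) ^ p := by
  have hp1 : 0 ≤ p - 1 := by linarith
  calc _ ≤ ∫⁻ t in Ioi 0, ENNReal.ofReal (K ^ (p - 1)) *
          ((∫⁻ τ in Ioo 0 t, g τ) ^ (p - 1) * g t * ∫⁻ s in Ioi t, ψ s) := by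
        refine setLIntegral_mono' measurableSet_Ioi fun t ht => ?_
        grw [hK t ht, ENNReal.mul_rpow_of_nonneg _ _ hp1, ENNReal.ofReal_rpow_of_nonneg hK0 hp1]
        simp only [mul_assoc, le_refl]
    _ = ENNReal.ofReal (K ^ (p - 1)) *
          ∫⁻ t in Ioi 0, (∫⁻ τ in Ioo 0 t, g τ) ^ (p - 1) * g t * ∫⁻ s in Ioi t, ψ s :=
        lintegral_const_mul' _ _ ENNReal.ofReal_ne_top
    _ ≤ _ := mul_le_mul_right (by
        simpa using lintegral_rpow_sub_one_mul_mul_lintegral_Ioi_le hg hψ (C := 1) fun s => by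
          simpa using setLIntegral_rpow_sub_one_mul_le_of_one_le hg hp s) _

theorem lintegral_rpow_mul_tail_le_of_lt_one {g ψ : ℝ → ℝ≥0∞} (hg : Measurable g)
    (hψ : Measurable ψ) {p : ℝ} (hp0 : 0 < p) (hp1 : p < 1) (hψ0 : ∀ t ∈ Ioi 0, ψ t ≠ 0)
    (hg0 : ∀ t ∈ Ioi 0, ∫⁻ τ in Ioo 0 t, g τ = 0 → g t = 0) :
    ∫⁻ t in Ioi 0, (g t * ∫⁻ s in Ioi t, ψ s) ^ p * ψ t ^ (1 - p) ≤
      ENNReal.ofReal ((1 / p) ^ p) * ∫⁻ s in Ioi 0, ψ s * (∫⁻ τ in Ioo 0 s, g τ) ^ p := by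
  set Φ := fun t => ∫⁻ τ in Ioo 0 t, g τ
  set R := ∫⁻ s in Ioi 0, ψ s * Φ s ^ p
  have hΦ : Measurable Φ := measurable_setLIntegral_Ioo g
  have hB : Measurable fun t => ∫⁻ s in Ioi t, ψ s :=
    Antitone.measurable fun _ _ h => lintegral_mono_set (Ioi_subset_Ioi h)
  rcases eq_or_ne R ⊤ with hR | hR
  · rw [hR, ENNReal.mul_top (by simp; positivity)]
    exact le_top
  have hΦtop : ∀ t ∈ Ioi 0, Φ t ≠ ⊤ := by
    intro t ht hΦt
    refine hR (eq_top_iff.2 ?_)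
    calc ⊤ = ∫⁻ s in Ioi t, ⊤ := by simp
      _ = ∫⁻ s in Ioi t, ψ s * Φ s ^ p := setLIntegral_congr_fun measurableSet_Ioi fun s hs => by
          have hΦs : Φ t ≤ Φ s := lintegral_mono_set (Ioo_subset_Ioo_right (le_of_lt hs))
          rw [hΦt, top_le_iff] at hΦs
          rw [hΦs, ENNReal.top_rpow_of_pos hp0,
            ENNReal.mul_top (hψ0 s (mem_Ioi.2 ((mem_Ioi.1 ht).trans hs)))]
      _ ≤ R := lintegral_mono_set (Ioi_subset_Ioi (le_of_lt ht))
  calc ∫⁻ t in Ioi 0, (g t * ∫⁻ s in Ioi t, ψ s) ^ p * ψ t ^ (1 - p)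
      ≤ ∫⁻ t in Ioi 0, (Φ t ^ (p - 1) * g t * ∫⁻ s in Ioi t, ψ s) ^ p *
          (ψ t * Φ t ^ p) ^ (1 - p) := by
        refine setLIntegral_mono' measurableSet_Ioi fun t ht => ?_
        rcases eq_or_ne (Φ t) 0 with h0 | h0
        · simp [hg0 t ht h0, ENNReal.zero_rpow_of_pos hp0]
        · rw [mul_assoc, ENNReal.weighted_geom_mean_cancel h0 (hΦtop t ht) hp0.le hp1.le]
    _ ≤ (∫⁻ t in Ioi 0, Φ t ^ (p - 1) * g t * ∫⁻ s in Ioi t, ψ s) ^ p * R ^ (1 - p) :=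
        lintegral_rpow_mul_rpow_one_sub_le _ (((hΦ.pow_const _).mul hg).mul hB).aemeasurable
          (hψ.mul (hΦ.pow_const _)).aemeasurable hp0 hp1
    _ ≤ (ENNReal.ofReal (1 / p) * R) ^ p * R ^ (1 - p) := by
        gcongr
        exact lintegral_rpow_sub_one_mul_mul_lintegral_Ioi_le hg hψ
          (setLIntegral_rpow_sub_one_mul_le_of_lt_one hg hp0 hp1)
    _ = ENNReal.ofReal ((1 / p) ^ p) * R := by
        rw [ENNReal.mul_rpow_of_nonneg _ _ hp0.le, mul_assoc,
          ← ENNReal.rpow_add_of_nonneg _ _ hp0.le (by linarith), add_sub_cancel,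
          ENNReal.rpow_one, ENNReal.ofReal_rpow_of_nonneg (by positivity) hp0.le]

theorem lintegral_mixed_rpow_tail_le {g ψ : ℝ → ℝ≥0∞} (hg : Measurable g) (hψ : Measurable ψ)
    {q r K : ℝ} (hq : 0 < q) (hr : 0 < r) (hK0 : 0 ≤ K) (hψ0 : ∀ t ∈ Ioi 0, ψ t ≠ 0)
    (hK : ∀ t ∈ Ioi 0, ENNReal.ofReal t * g t ≤ ENNReal.ofReal K * ∫⁻ τ in Ioo 0 t, g τ) :
    ∫⁻ t in Ioi 0, (ENNReal.ofReal t * g t) ^ (r / q - r / max q r) *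
        (g t * ∫⁻ s in Ioi t, ψ s) ^ (r / max q r) * ψ t ^ (1 - r / max q r) ≤
      ENNReal.ofReal (max (K ^ (r / q - 1)) ((1 / (r / q)) ^ (r / q))) *
        ∫⁻ s in Ioi 0, ψ s * (∫⁻ τ in Ioo 0 s, g τ) ^ (r / q) := by
  rcases le_or_gt q r with hqr | hqr
  · rw [max_eq_right hqr, div_self hr.ne']
    norm_num only [ENNReal.rpow_one, ENNReal.rpow_zero, mul_one]
    exact (lintegral_rpow_mul_tail_le_of_one_le hg hψ ((one_le_div hq).2 hqr) hK0 hK).trans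
      (mul_le_mul_left (ENNReal.ofReal_le_ofReal (le_max_left _ _)) _)
  · have hg0 : ∀ t ∈ Ioi 0, ∫⁻ τ in Ioo 0 t, g τ = 0 → g t = 0 := fun t ht h0 => by
      have h := hK t ht
      rw [h0, mul_zero, nonpos_iff_eq_zero, mul_eq_zero] at h
      exact h.resolve_left (by simpa using ht)
    rw [max_eq_left hqr.le]
    simp only [sub_self, ENNReal.rpow_zero, one_mul]
    exact (lintegral_rpow_mul_tail_le_of_lt_one hg hψ (by positivity) ((div_lt_one hq).2 hqr)
      hψ0 hg0).trans (mul_le_mul_left (ENNReal.ofReal_le_ofReal (le_max_right _ _)) _)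

theorem SlowlyVarying.exists_pos_mul_inv_le {a : ℝ → ℝ} (ha : SlowlyVarying a) :
    ∃ c : ℝ, 0 < c ∧ ∀ τ t, 0 < τ → τ ≤ t → c * (t⁻¹ * a t) ≤ τ⁻¹ * a τ := by
  obtain ⟨g, hg, c, C, hc, hC, hequiv⟩ := (ha.2.2 1 one_pos).2
  refine ⟨c / C, div_pos hc hC, fun τ t hτ hτt => ?_⟩
  have ht : 0 < t := hτ.trans_le hτt
  have hupper := (hequiv t ht).2
  have hlower := (hequiv τ hτ).1
  simp only [Real.rpow_neg_one] at hupper hlower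
  calc c / C * (t⁻¹ * a t) ≤ c / C * (C * g t) := by gcongr
    _ = c * g t := by field_simp
    _ ≤ c * g τ := by gcongr; exact hg hτ ht hτt
    _ ≤ τ⁻¹ * a τ := hlower

theorem AntitoneOn.ofReal_div_mul_le {k : ℝ → ℝ≥0∞}
    (hk : AntitoneOn (fun t => k t / ENNReal.ofReal t) (Ioi 0)) {τ t : ℝ} (hτ : 0 < τ)
    (hτt : τ ≤ t) : ENNReal.ofReal (τ / t) * k t ≤ k τ := by
  have ht : 0 < t := hτ.trans_le hτt
  calc ENNReal.ofReal (τ / t) * k t = k t / ENNReal.ofReal t * ENNReal.ofReal τ := by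
        rw [ENNReal.ofReal_div_of_pos ht, div_eq_mul_inv, div_eq_mul_inv]
        ring
    _ ≤ k τ / ENNReal.ofReal τ * ENNReal.ofReal τ := mul_le_mul_left (hk hτ ht hτt) _
    _ = k τ := ENNReal.div_mul_cancel (by simpa using hτ) ENNReal.ofReal_ne_top

theorem ofReal_mul_le_rpow_mul_mul {a : ℝ → ℝ} {k : ℝ → ℝ≥0∞} {c e τ t : ℝ} (hc : 0 < c)
    (he : e ≤ 0) (hat : 0 ≤ a t) (hac : c * (t⁻¹ * a t) ≤ τ⁻¹ * a τ)
    (hk : AntitoneOn (fun t => k t / ENNReal.ofReal t) (Ioi 0)) (hτ : 0 < τ) (hτt : τ ≤ t) :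
    ENNReal.ofReal (c * (τ / t) ^ 2) * (ENNReal.ofReal (t ^ e * a t) * k t) ≤
      ENNReal.ofReal (τ ^ e * a τ) * k τ := by
  have ht : 0 < t := hτ.trans_le hτt
  have ha : c * (τ / t) * a t ≤ a τ :=
    calc c * (τ / t) * a t = τ * (c * (t⁻¹ * a t)) := by ring
      _ ≤ τ * (τ⁻¹ * a τ) := mul_le_mul_of_nonneg_left hac hτ.le
      _ = a τ := by field_simp
  have hsplit : ENNReal.ofReal (c * (τ / t) ^ 2) * ENNReal.ofReal (t ^ e * a t) =
      ENNReal.ofReal (t ^ e * (c * (τ / t) * a t)) * ENNReal.ofReal (τ / t) := by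
    rw [← ENNReal.ofReal_mul (by positivity), ← ENNReal.ofReal_mul
      (mul_nonneg (Real.rpow_nonneg ht.le _) (mul_nonneg (by positivity) hat))]
    ring_nf
  rw [← mul_assoc, hsplit, mul_assoc]
  exact mul_le_mul' (ENNReal.ofReal_le_ofReal (mul_le_mul (Real.rpow_le_rpow_of_nonpos hτ hτt he)
    ha (mul_nonneg (by positivity) hat) (Real.rpow_nonneg hτ.le _))) (hk.ofReal_div_mul_le hτ hτt)

theorem mul_rpow_le_setLIntegral_Ioo {F : ℝ → ℝ≥0∞} {c q t : ℝ} (hc : 0 < c) (hq : 0 < q)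
    (ht : 0 < t) (hF : ∀ τ ∈ Ioo (t / 2) t, ENNReal.ofReal c * F t ≤ F τ) :
    ENNReal.ofReal t * F t ^ q ≤ ENNReal.ofReal (2 / c ^ q) * ∫⁻ τ in Ioo 0 t, F τ ^ q := by
  have hlower : ENNReal.ofReal (t / 2) * (ENNReal.ofReal c * F t) ^ q ≤
      ∫⁻ τ in Ioo 0 t, F τ ^ q :=
    calc ENNReal.ofReal (t / 2) * (ENNReal.ofReal c * F t) ^ q
        = ∫⁻ _ in Ioo (t / 2) t, (ENNReal.ofReal c * F t) ^ q := by
          rw [setLIntegral_const, Real.volume_Ioo, mul_comm, sub_half]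
      _ ≤ ∫⁻ τ in Ioo (t / 2) t, F τ ^ q :=
          setLIntegral_mono' measurableSet_Ioo fun τ hτ => by gcongr; exact hF τ hτ
      _ ≤ ∫⁻ τ in Ioo 0 t, F τ ^ q := lintegral_mono_set (Ioo_subset_Ioo_left (by positivity))
  refine le_of_eq_of_le ?_ (mul_le_mul_right hlower _)
  rw [ENNReal.mul_rpow_of_nonneg _ _ hq.le, ENNReal.ofReal_rpow_of_pos hc, ← mul_assoc,
    ← mul_assoc, ← ENNReal.ofReal_mul (by positivity), ← ENNReal.ofReal_mul (by positivity)]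
  congr 2
  field_simp

theorem mul_rpow_le_setLIntegral_Ioo_of_antitoneOn {a : ℝ → ℝ} {k : ℝ → ℝ≥0∞} {c e q t : ℝ}
    (hc : 0 < c) (he : e ≤ 0) (hq : 0 < q)
    (hac : ∀ τ t, 0 < τ → τ ≤ t → c * (t⁻¹ * a t) ≤ τ⁻¹ * a τ)
    (hk : AntitoneOn (fun t => k t / ENNReal.ofReal t) (Ioi 0)) (ht : 0 < t) (hat : 0 ≤ a t) :
    ENNReal.ofReal t * (ENNReal.ofReal (t ^ e * a t) * k t) ^ q ≤
      ENNReal.ofReal (2 / (c / 4) ^ q) *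
        ∫⁻ τ in Ioo 0 t, (ENNReal.ofReal (τ ^ e * a τ) * k τ) ^ q := by
  refine mul_rpow_le_setLIntegral_Ioo (by positivity) hq ht fun τ hτ => ?_
  have hτ0 : 0 < τ := (half_pos ht).trans hτ.1
  have hhalf : 1 / 2 ≤ τ / t := by rw [le_div_iff₀ ht]; linarith [hτ.1]
  refine (mul_le_mul_left (ENNReal.ofReal_le_ofReal ?_) _).trans
    (ofReal_mul_le_rpow_mul_mul hc he hat (hac τ t hτ0 hτ.2.le) hk hτ0 hτ.2.le)
  calc c / 4 = c * (1 / 2) ^ 2 := by ring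
    _ ≤ c * (τ / t) ^ 2 := by gcongr

theorem rpow_d_weight_eq {t A Bb β θ r q m : ℝ} (ht : 0 < t) (hA : 0 < A) (hB : 0 < Bb)
    (hβ : 0 ≤ β) (hr : 0 < r) (hq : 0 < q) (hm : 0 < m) :
    (t ^ (-θ - 1 / r) * (Bb * (β / (Bb / A) ^ r) ^ (1 / m))) ^ r =
      t ^ (r / q - r / m) * (t ^ (-θ - 1 / q) * A) ^ r * (t⁻¹ * (Bb / A) ^ r) ^ (1 - r / m) *
        β ^ (r / m) := by
  have hL : 0 < (Bb / A) ^ r := by positivity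
  have htpow : t ^ ((-θ - 1 / r) * r) =
      t ^ (r / q - r / m) * t ^ ((-θ - 1 / q) * r) * t ^ (-(1 - r / m)) := by
    rw [← Real.rpow_add ht, ← Real.rpow_add ht]
    congr 1
    field_simp
    ring
  rw [Real.mul_rpow (by positivity) (by positivity), Real.mul_rpow hB.le (by positivity),
    Real.mul_rpow (by positivity) hA.le, Real.mul_rpow (by positivity) hL.le,
    ← Real.rpow_mul ht.le, ← Real.rpow_mul ht.le, ← Real.rpow_mul (div_nonneg hβ hL.le),
    Real.div_rpow hβ hL.le, Real.rpow_sub hL, Real.rpow_one, Real.inv_rpow ht.le,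
    ← Real.rpow_neg ht.le, htpow, Real.div_rpow hB.le hA.le, one_div_mul_eq_div]
  field_simp

theorem d_integrand_le {t A Bb θ r q m : ℝ} {κ β : ℝ≥0∞} (ht : 0 < t) (hA : 0 < A)
    (hB : 0 < Bb) (hr : 0 < r) (hq : 0 < q) (hqm : q ≤ m) (hrm : r ≤ m) :
    (ENNReal.ofReal (t ^ (-θ - 1 / r) * (Bb * (β.toReal / (Bb / A) ^ r) ^ (1 / m))) * κ) ^ r ≤
      (ENNReal.ofReal t * (ENNReal.ofReal (t ^ (-θ - 1 / q) * A) * κ) ^ q) ^ (r / q - r / m) *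
        ((ENNReal.ofReal (t ^ (-θ - 1 / q) * A) * κ) ^ q * β) ^ (r / m) *
        ENNReal.ofReal (t⁻¹ * (Bb / A) ^ r) ^ (1 - r / m) := by
  have hm : 0 < m := hq.trans_le hqm
  have hs : 0 ≤ r / m := by positivity
  have hps : 0 ≤ r / q - r / m := sub_nonneg.2 (div_le_div_of_nonneg_left hr.le hq hqm)
  have hs1 : 0 ≤ 1 - r / m := sub_nonneg.2 ((div_le_one hm).2 hrm)
  have hqp : q * (r / q) = r := by field_simp
  set u := ENNReal.ofReal (t ^ (-θ - 1 / q) * A)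
  set ψ := ENNReal.ofReal (t⁻¹ * (Bb / A) ^ r)
  have hu : u ^ (q * (r / q - r / m)) * u ^ (q * (r / m)) = u ^ r := by
    rw [← ENNReal.rpow_add_of_nonneg _ _ (by positivity) (by positivity), ← mul_add,
      sub_add_cancel, hqp]
  have hκ : κ ^ (q * (r / q - r / m)) * κ ^ (q * (r / m)) = κ ^ r := by
    rw [← ENNReal.rpow_add_of_nonneg _ _ (by positivity) (by positivity), ← mul_add,
      sub_add_cancel, hqp]
  calc _ = ENNReal.ofReal t ^ (r / q - r / m) * u ^ r * ψ ^ (1 - r / m) *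
          ENNReal.ofReal β.toReal ^ (r / m) * κ ^ r := by
        rw [ENNReal.mul_rpow_of_nonneg _ _ hr.le,
          ENNReal.ofReal_rpow_of_nonneg (by positivity) hr.le,
          rpow_d_weight_eq ht hA hB ENNReal.toReal_nonneg hr hq hm,
          ENNReal.ofReal_mul (by positivity), ENNReal.ofReal_mul (by positivity),
          ENNReal.ofReal_mul (by positivity), ← ENNReal.ofReal_rpow_of_pos ht,
          ← ENNReal.ofReal_rpow_of_nonneg (by positivity) hr.le,
          ← ENNReal.ofReal_rpow_of_nonneg (by positivity) hs1,
          ← ENNReal.ofReal_rpow_of_nonneg ENNReal.toReal_nonneg hs]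
    -- only `≤`: `β.toReal = 0` when `β = ∞`
    _ ≤ ENNReal.ofReal t ^ (r / q - r / m) * u ^ r * ψ ^ (1 - r / m) * β ^ (r / m) * κ ^ r := by
        gcongr
        exact ENNReal.ofReal_toReal_le
    _ = _ := by
        simp only [ENNReal.mul_rpow_of_nonneg _ _ hq.le, ENNReal.mul_rpow_of_nonneg _ _ hps,
          ENNReal.mul_rpow_of_nonneg _ _ hs, ← ENNReal.rpow_mul]
        rw [← hu, ← hκ]
        ring

theorem eLq_le_ofReal_mul_of_lintegral_le {f h : ℝ → ℝ≥0∞} {r C : ℝ} {S : Set ℝ} (hr : 0 < r)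
    (hC : 0 ≤ C) (hfh : ∫⁻ t in S, f t ^ r ≤ ENNReal.ofReal C * ∫⁻ t in S, h t ^ r) :
    eLq f r S ≤ ENNReal.ofReal (C ^ (1 / r)) * eLq h r S := by
  unfold eLq
  grw [hfh, ENNReal.mul_rpow_of_nonneg _ _ (by positivity),
    ENNReal.ofReal_rpow_of_nonneg hC (by positivity)]

theorem ofReal_rpow_neg_one_div_mul_rpow_one_div {t x r q : ℝ} {y : ℝ≥0∞} (ht : 0 < t)
    (hx : 0 ≤ x) (hr : 0 < r) :
    (ENNReal.ofReal (t ^ (-(1 / r)) * x) * y ^ (1 / q)) ^ r =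
      ENNReal.ofReal (t⁻¹ * x ^ r) * y ^ (r / q) := by
  rw [ENNReal.mul_rpow_of_nonneg _ _ hr.le, ← ENNReal.rpow_mul,
    ENNReal.ofReal_rpow_of_nonneg (by positivity) hr.le, Real.mul_rpow (by positivity) hx,
    ← Real.rpow_mul ht.le, show -(1 / r) * r = -1 by field_simp, Real.rpow_neg_one,
    one_div_mul_eq_div]

theorem L_interp_embed_general (θ r q : ℝ) (hθ0 : 0 ≤ θ)
    (hr : 0 < r) (hq : 0 < q)
    (a b : ℝ → ℝ) (ha : SlowlyVarying a) (hb : SlowlyVarying b)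
    (d : ℝ → ℝ)
    (hd : ∀ x ∈ Ioi (0 : ℝ), d x =
      b x * ((∫⁻ y in Ioi x, ENNReal.ofReal (y⁻¹ * (b y / a y) ^ r)).toReal /
        (b x / a x) ^ r) ^ (1 / max q r)) :
    ∃ C : ℝ, 0 < C ∧ ∀ k : ℝ → ℝ≥0∞, Measurable k →
      AntitoneOn (fun t => k t / ENNReal.ofReal t) (Ioi 0) →
      eLq (fun t => ENNReal.ofReal (t ^ (-θ - 1 / r) * d t) * k t) r (Ioi 0) ≤
        ENNReal.ofReal C *
          eLq (fun t => ENNReal.ofReal (t ^ (-(1 / r)) * (b t / a t)) *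
            eLq (fun τ => ENNReal.ofReal (τ ^ (-θ - 1 / q) * a τ) * k τ) q (Ioo 0 t)) r
            (Ioi 0) := by
  obtain ⟨c, hc, hac⟩ := ha.exists_pos_mul_inv_le
  obtain ⟨ha_meas, ha_pos, -⟩ := ha
  obtain ⟨hb_meas, hb_pos, -⟩ := hb
  set K := 2 / (c / 4) ^ q
  refine ⟨max (K ^ (r / q - 1)) ((1 / (r / q)) ^ (r / q)) ^ (1 / r), by positivity,
    fun k hk hanti => eLq_le_ofReal_mul_of_lintegral_le hr (by positivity) ?_⟩
  set g : ℝ → ℝ≥0∞ := fun t => (ENNReal.ofReal (t ^ (-θ - 1 / q) * a t) * k t) ^ q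
  set ψ : ℝ → ℝ≥0∞ := fun t => ENNReal.ofReal (t⁻¹ * (b t / a t) ^ r)
  have hψ0 : ∀ t ∈ Ioi 0, ψ t ≠ 0 := fun t ht => (ENNReal.ofReal_pos.2 (mul_pos (inv_pos.2 ht)
    (Real.rpow_pos_of_pos (div_pos (hb_pos t ht) (ha_pos t ht)) r))).ne'
  have hK : ∀ t ∈ Ioi 0, ENNReal.ofReal t * g t ≤ ENNReal.ofReal K * ∫⁻ τ in Ioo 0 t, g τ :=
    fun t ht => mul_rpow_le_setLIntegral_Ioo_of_antitoneOn hc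
      (by linarith [one_div_pos.2 hq]) hq hac hanti ht (ha_pos t ht).le
  simp only [eLq]
  rw [setLIntegral_congr_fun measurableSet_Ioi fun t ht =>
    ofReal_rpow_neg_one_div_mul_rpow_one_div ht (div_pos (hb_pos t ht) (ha_pos t ht)).le hr]
  refine (setLIntegral_mono' measurableSet_Ioi fun t ht => ?_).trans
    (lintegral_mixed_rpow_tail_le (by fun_prop) (by fun_prop) hq hr (by positivity) hψ0 hK)
  rw [hd t ht]
  exact d_integrand_le ht (ha_pos t ht) (hb_pos t ht) hr hq (le_max_left _ _) (le_max_right _ _)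

/-- The `K`-functional inequality expressing the embedding
`(X₀,X₁)^{L}_{θ,r,b,q,a} ↪ (X₀,X₁)_{θ,r,d}`, with
`d(x) = b(x) ((∫_x^∞ y⁻¹ (b(y)/a(y))^r dy)/(b(x)/a(x))^r)^{1/max{q,r}}`. -/
theorem L_interp_embed (θ r q : ℝ) (hθ0 : 0 ≤ θ) (hθ1 : θ < 1)
    (hr : 0 < r) (hq : 0 < q)
    (a b : ℝ → ℝ) (ha : SlowlyVarying a) (hb : SlowlyVarying b)
    (hba : (∫⁻ y in Ioi (1 : ℝ), ENNReal.ofReal (y⁻¹ * (b y / a y) ^ r)) ≠ ∞)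
    (d : ℝ → ℝ)
    (hd : ∀ x ∈ Ioi (0 : ℝ), d x =
      b x * ((∫⁻ y in Ioi x, ENNReal.ofReal (y⁻¹ * (b y / a y) ^ r)).toReal /
        (b x / a x) ^ r) ^ (1 / max q r)) :
    ∃ C : ℝ, 0 < C ∧ ∀ k : ℝ → ℝ≥0∞, Measurable k →
      AntitoneOn (fun t => k t / ENNReal.ofReal t) (Ioi 0) →
      eLq (fun t => ENNReal.ofReal (t ^ (-θ - 1 / r) * d t) * k t) r (Ioi 0) ≤
        ENNReal.ofReal C *
          eLq (fun t => ENNReal.ofReal (t ^ (-(1 / r)) * (b t / a t)) *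
            eLq (fun τ => ENNReal.ofReal (τ ^ (-θ - 1 / q) * a τ) * k τ) q (Ioo 0 t)) r
            (Ioi 0) :=
  L_interp_embed_general θ r q hθ0 hr hq a b ha hb d hd

end
end

section
/- Let 1 ≤ P ≤ Q < ∞, let φ : (0,∞) × (0,∞) → [0,∞) be measurable, let v, w be measurable functions on (0,∞) that are positive and finite a.e., and let C > 0. Then the inequality (∫_0^∞ h(x)^Q v(x) dx)^{1/Q} ≤ C (∫_0^∞ (∫_0^∞ φ(x,y) h(y) dy)^P w(x) dx)^{1/P} holds for all non-increasing h : (0,∞) → [0,∞] if and only if (∫_0^z v(x) dx)^{1/Q} ≤ C (∫_0^∞ (∫_0^z φ(x,y) dy)^P w(x) dx)^{1/P} holds for all z ∈ (0,∞) (with the same constant C in both inequalities). -/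
/-!
Testing with `h = 1_{(0,z)}` turns the first inequality into the second. Conversely, extend `h`
by `∞` to a non-increasing `g` on `ℝ`. The layer-cake formula gives
`∫ g^Q v = ∫₀^∞ Q t^(Q-1) v({g > t}) dt`. Each level set `{g > t} ∩ (0,∞)` is an initial segment of
`(0,∞)`, hence a.e. equal to some `(0,z)` or equal to the increasing union of all of them, so the
testing inequality holds on it too. This bounds `∫ g^Q v` by `C^Q ∫ Q t^(Q-1) F(t)^(Q/P) dt`, where
`F(t) = ∫ (∫_{g>t} φ(x,·))^P w(x) dx` is non-increasing.

The analytic input is that `∫ (t^q)' f^(q/p) ≤ (∫ (t^p)' f)^(q/p)` for non-increasing `f` and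
`0 < p ≤ q`. Applied in `t` with `(p,q) = (P,Q)`, and then, after Tonelli, for each `x` with
`(1,P)`, it yields `∫ (t^P)' F ≤ ∫ (∫ φ(x,y) g(y) dy)^P w(x) dx`, the last step being the
layer-cake formula once more.
-/

open MeasureTheory Set Filter Topology
open scoped ENNReal

lemma monotoneOn_add_rpow_sub_rpow {r e : ℝ} (hr : 1 ≤ r) (he : 0 ≤ e) :
    MonotoneOn (fun x : ℝ => (x + e) ^ r - x ^ r) (Ici 0) := by
  have hderiv : ∀ x : ℝ, HasDerivAt (fun x : ℝ => (x + e) ^ r - x ^ r)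
      (1 * r * (x + e) ^ (r - 1) - 1 * r * x ^ (r - 1)) x := fun x =>
    (((hasDerivAt_id x).add_const e).rpow_const (Or.inr hr)).sub
      ((hasDerivAt_id x).rpow_const (Or.inr hr))
  have hdiff : Differentiable ℝ (fun x : ℝ => (x + e) ^ r - x ^ r) := fun x =>
    (hderiv x).differentiableAt
  refine monotoneOn_of_deriv_nonneg (convex_Ici 0) hdiff.continuous.continuousOn
    hdiff.differentiableOn fun x hx => ?_
  rw [interior_Ici] at hx
  have : x ^ (r - 1) ≤ (x + e) ^ (r - 1) :=
    Real.rpow_le_rpow hx.le (by linarith) (by linarith)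
  rw [(hderiv x).deriv]
  nlinarith

lemma rpow_add_rpow_sub_rpow_le {r a c d : ℝ} (hr : 1 ≤ r) (hc : 0 ≤ c) (hca : c ≤ a)
    (hcd : c ≤ d) : a ^ r + (d ^ r - c ^ r) ≤ (a + (d - c)) ^ r := by
  have := monotoneOn_add_rpow_sub_rpow hr (sub_nonneg.mpr hcd) hc (hc.trans hca) hca
  simp only [add_sub_cancel] at this
  linarith

namespace ENNReal

lemma rpow_add_ofReal_sub_mul_rpow_le {r y y' : ℝ} {A β : ℝ≥0∞} (hr : 1 ≤ r) (hy : 0 ≤ y)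
    (hyy' : y ≤ y') (hA : ENNReal.ofReal y * β ≤ A) :
    A ^ r + ENNReal.ofReal (y' ^ r - y ^ r) * β ^ r ≤ (A + ENNReal.ofReal (y' - y) * β) ^ r := by
  have hr0 : 0 < r := one_pos.trans_le hr
  rcases eq_or_ne A ⊤ with rfl | hAtop
  · simp [top_rpow_of_pos hr0]
  rcases eq_or_ne β ⊤ with rfl | hβtop
  · rcases hyy'.eq_or_lt with rfl | hlt
    · simp
    · rw [mul_top (by simpa using hlt), add_top, top_rpow_of_pos hr0]
      exact le_top
  obtain ⟨a, ha, rfl⟩ : ∃ a, 0 ≤ a ∧ A = ENNReal.ofReal a :=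
    ⟨A.toReal, toReal_nonneg, (ofReal_toReal hAtop).symm⟩
  obtain ⟨b, hb, rfl⟩ : ∃ b, 0 ≤ b ∧ β = ENNReal.ofReal b :=
    ⟨β.toReal, toReal_nonneg, (ofReal_toReal hβtop).symm⟩
  have hca : y * b ≤ a := by rwa [← ofReal_mul hy, ofReal_le_ofReal_iff ha] at hA
  have hcd : y * b ≤ y' * b := mul_le_mul_of_nonneg_right hyy' hb
  have key := rpow_add_rpow_sub_rpow_le hr (mul_nonneg hy hb) hca hcd
  have hpow : y ^ r ≤ y' ^ r := Real.rpow_le_rpow hy hyy' hr0.le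
  rw [Real.mul_rpow hy hb, Real.mul_rpow (hy.trans hyy') hb, ← sub_mul, ← sub_mul] at key
  rw [ofReal_rpow_of_nonneg hb hr0.le, ofReal_rpow_of_nonneg ha hr0.le,
    ← ofReal_mul (sub_nonneg.mpr hpow), ← ofReal_mul (sub_nonneg.mpr hyy'),
    ← ofReal_add (by positivity) (mul_nonneg (sub_nonneg.mpr hpow) (by positivity)),
    ← ofReal_add ha (mul_nonneg (sub_nonneg.mpr hyy') hb),
    ofReal_rpow_of_nonneg (add_nonneg ha (mul_nonneg (sub_nonneg.mpr hyy') hb)) hr0.le]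
  exact ofReal_le_ofReal key

end ENNReal

lemma ofReal_mul_le_sum_ofReal_sub_mul {b : ℕ → ℝ≥0∞} (hb : Antitone b) {y : ℕ → ℝ}
    (hy0 : y 0 = 0) (hy : Monotone y) (n : ℕ) :
    ENNReal.ofReal (y n) * b n ≤ ∑ i ∈ Finset.range n, ENNReal.ofReal (y (i + 1) - y i) * b i :=
  calc ENNReal.ofReal (y n) * b n
      = ∑ i ∈ Finset.range n, ENNReal.ofReal (y (i + 1) - y i) * b n := by
        rw [← Finset.sum_mul, ← ENNReal.ofReal_sum_of_nonneg fun i _ => sub_nonneg.mpr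
          (hy i.le_succ), Finset.sum_range_sub, hy0, sub_zero]
    _ ≤ _ := Finset.sum_le_sum fun i hi => by gcongr; exact hb (Finset.mem_range.mp hi).le

lemma sum_ofReal_rpow_sub_mul_rpow_le {r : ℝ} (hr : 1 ≤ r) {b : ℕ → ℝ≥0∞} (hb : Antitone b)
    {y : ℕ → ℝ} (hy0 : y 0 = 0) (hy : Monotone y) (n : ℕ) :
    ∑ i ∈ Finset.range n, ENNReal.ofReal (y (i + 1) ^ r - y i ^ r) * b i ^ r ≤
      (∑ i ∈ Finset.range n, ENNReal.ofReal (y (i + 1) - y i) * b i) ^ r := by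
  induction n with
  | zero => simp [ENNReal.zero_rpow_of_pos (one_pos.trans_le hr)]
  | succ n ih =>
    rw [Finset.sum_range_succ, Finset.sum_range_succ]
    calc _ ≤ (∑ i ∈ Finset.range n, ENNReal.ofReal (y (i + 1) - y i) * b i) ^ r +
          ENNReal.ofReal (y (n + 1) ^ r - y n ^ r) * b n ^ r := by gcongr
      _ ≤ _ := ENNReal.rpow_add_ofReal_sub_mul_rpow_le hr (hy0 ▸ hy n.zero_le) (hy n.le_succ)
          (ofReal_mul_le_sum_ofReal_sub_mul hb hy0 hy n)

lemma lintegral_Ioc_ofReal_mul_rpow_sub_one {q a b : ℝ} (hq : 0 < q) (ha : 0 ≤ a) (hab : a ≤ b) :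
    ∫⁻ t in Ioc a b, ENNReal.ofReal (q * t ^ (q - 1)) = ENNReal.ofReal (b ^ q - a ^ q) := by
  have hint : IntegrableOn (fun t : ℝ => q * t ^ (q - 1)) (Ioc a b) :=
    (intervalIntegrable_iff_integrableOn_Ioc_of_le hab).mp
      ((intervalIntegral.intervalIntegrable_rpow' (by linarith)).const_mul q)
  rw [← ofReal_integral_eq_lintegral_ofReal hint, ← intervalIntegral.integral_of_le hab,
    intervalIntegral.integral_const_mul, integral_rpow (Or.inl (by linarith)), sub_add_cancel,
    mul_div_cancel₀ _ hq.ne']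
  filter_upwards [ae_restrict_mem measurableSet_Ioc] with t ht
  exact mul_nonneg hq.le (Real.rpow_nonneg (ha.trans ht.1.le) _)

lemma lintegral_Ioi_ofReal_mul_rpow_sub_one {q : ℝ} (hq : 0 < q) :
    ∫⁻ t in Ioi (0 : ℝ), ENNReal.ofReal (q * t ^ (q - 1)) = ∞ := by
  refine ENNReal.eq_top_of_forall_nnreal_le fun r => ?_
  have hb : (0 : ℝ) ≤ (r : ℝ) ^ q⁻¹ := by positivity
  calc (r : ℝ≥0∞) = ENNReal.ofReal (((r : ℝ) ^ q⁻¹) ^ q - 0 ^ q) := by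
        rw [Real.zero_rpow hq.ne', sub_zero, Real.rpow_inv_rpow r.coe_nonneg hq.ne',
          ENNReal.ofReal_coe_nnreal]
    _ = ∫⁻ t in Ioc 0 ((r : ℝ) ^ q⁻¹), ENNReal.ofReal (q * t ^ (q - 1)) :=
        (lintegral_Ioc_ofReal_mul_rpow_sub_one hq le_rfl hb).symm
    _ ≤ _ := lintegral_mono_set Ioc_subset_Ioi_self

lemma lintegral_Ioi_indicator_ofReal_lt {q : ℝ} (hq : 0 < q) (a : ℝ≥0∞) :
    ∫⁻ t in Ioi (0 : ℝ), {t : ℝ | ENNReal.ofReal t < a}.indicator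
      (fun t => ENNReal.ofReal (q * t ^ (q - 1))) t = a ^ q := by
  rcases eq_or_ne a ∞ with rfl | ha
  · simp only [ENNReal.ofReal_lt_top, ofPred_true, indicator_univ]
    rw [lintegral_Ioi_ofReal_mul_rpow_sub_one hq, ENNReal.top_rpow_of_pos hq]
  have hlevel : {t : ℝ | ENNReal.ofReal t < a} ∩ Ioi 0 = Ioo 0 a.toReal := by
    ext t
    simp only [mem_inter_iff, mem_ofPred_eq, mem_Ioi, mem_Ioo]
    exact ⟨fun ⟨hta, ht⟩ => ⟨ht, (ENNReal.ofReal_lt_iff_lt_toReal ht.le ha).mp hta⟩,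
      fun ⟨ht, hta⟩ => ⟨(ENNReal.ofReal_lt_iff_lt_toReal ht.le ha).mpr hta, ht⟩⟩
  rw [setLIntegral_indicator (measurableSet_lt ENNReal.measurable_ofReal measurable_const),
    hlevel, setLIntegral_congr Ioo_ae_eq_Ioc,
    lintegral_Ioc_ofReal_mul_rpow_sub_one hq le_rfl ENNReal.toReal_nonneg,
    Real.zero_rpow hq.ne', sub_zero, ← ENNReal.ofReal_rpow_of_nonneg ENNReal.toReal_nonneg hq.le,
    ENNReal.ofReal_toReal ha]

lemma lintegral_rpow_mul_eq_lintegral_setLIntegral_lt {α : Type*} [MeasurableSpace α]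
    {μ : Measure α} [SFinite μ] {g c : α → ℝ≥0∞} (hg : Measurable g) (hc : Measurable c)
    {q : ℝ} (hq : 0 < q) :
    ∫⁻ s, g s ^ q * c s ∂μ = ∫⁻ t in Ioi (0 : ℝ),
      ENNReal.ofReal (q * t ^ (q - 1)) * ∫⁻ s in {s | ENNReal.ofReal t < g s}, c s ∂μ := by
  set k : ℝ → ℝ≥0∞ := fun t => ENNReal.ofReal (q * t ^ (q - 1))
  have hk : Measurable k := by fun_prop
  have hswap : ∀ s t, {t : ℝ | ENNReal.ofReal t < g s}.indicator k t * c s =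
      k t * {s | ENNReal.ofReal t < g s}.indicator c s := by
    intro s t
    by_cases h : ENNReal.ofReal t < g s <;> simp [h]
  have hmeas : Measurable fun p : α × ℝ => {t : ℝ | ENNReal.ofReal t < g p.1}.indicator k p.2 :=
    (hk.comp measurable_snd).indicator
      (measurableSet_lt (ENNReal.measurable_ofReal.comp measurable_snd) (hg.comp measurable_fst))
  calc ∫⁻ s, g s ^ q * c s ∂μ
      = ∫⁻ s, (∫⁻ t in Ioi (0 : ℝ), {t : ℝ | ENNReal.ofReal t < g s}.indicator k t * c s) ∂μ := by
        refine lintegral_congr fun s => ?_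
        rw [lintegral_mul_const _ (hk.indicator (measurableSet_lt ENNReal.measurable_ofReal
          measurable_const)), lintegral_Ioi_indicator_ofReal_lt hq]
    _ = ∫⁻ t in Ioi (0 : ℝ), ∫⁻ s, {t : ℝ | ENNReal.ofReal t < g s}.indicator k t * c s ∂μ :=
        lintegral_lintegral_swap (hmeas.mul (hc.comp measurable_fst)).aemeasurable
    _ = _ := by
        refine lintegral_congr fun t => ?_
        simp_rw [hswap]
        rw [lintegral_const_mul _ (hc.indicator (measurableSet_lt measurable_const hg)),
          lintegral_indicator (measurableSet_lt measurable_const hg)]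

section Dyadic

noncomputable def dyadicCeil (n : ℕ) (t : ℝ) : ℝ := ⌈t * 2 ^ n⌉ / 2 ^ n

lemma le_dyadicCeil (n : ℕ) (t : ℝ) : t ≤ dyadicCeil n t := by
  rw [dyadicCeil, le_div_iff₀ (by positivity)]
  exact Int.le_ceil _

lemma dyadicCeil_le (n : ℕ) (t : ℝ) : dyadicCeil n t ≤ t + (2 ^ n)⁻¹ := by
  rw [dyadicCeil, div_le_iff₀ (by positivity), add_mul, inv_mul_cancel₀ (by positivity)]
  exact (Int.ceil_lt_add_one _).le

lemma monotone_dyadicCeil (n : ℕ) : Monotone (dyadicCeil n) := fun s t hst => by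
  unfold dyadicCeil
  gcongr

lemma tendsto_dyadicCeil (t : ℝ) : Tendsto (fun n => dyadicCeil n t) atTop (𝓝 t) := by
  have h : Tendsto (fun n : ℕ => t + (2 ^ n : ℝ)⁻¹) atTop (𝓝 t) := by
    simpa using (tendsto_const_nhds (x := t)).add
      (tendsto_inv_atTop_zero.comp (tendsto_pow_atTop_atTop_of_one_lt (one_lt_two (α := ℝ))))
  exact tendsto_of_tendsto_of_tendsto_of_le_of_le tendsto_const_nhds h (le_dyadicCeil · t)
    (dyadicCeil_le · t)

lemma dyadicCeil_eq_of_mem_Ioc {n i : ℕ} {t : ℝ}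
    (ht : t ∈ Ioc ((i : ℝ) / 2 ^ n) ((i + 1) / 2 ^ n)) :
    dyadicCeil n t = (i + 1) / 2 ^ n := by
  have h2 : (0 : ℝ) < 2 ^ n := by positivity
  have hceil : ⌈t * 2 ^ n⌉ = (i + 1 : ℤ) := by
    obtain ⟨hlo, hhi⟩ := ht
    rw [div_lt_iff₀ h2] at hlo
    rw [le_div_iff₀ h2] at hhi
    rw [Int.ceil_eq_iff]
    push_cast
    constructor <;> linarith
  rw [dyadicCeil, hceil]
  push_cast
  ring

noncomputable def dyadicStep (f : ℝ → ℝ≥0∞) (n : ℕ) : ℝ → ℝ≥0∞ :=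
  (Ioc 0 (n : ℝ)).indicator fun t => f (dyadicCeil n t)

variable {f : ℝ → ℝ≥0∞}

lemma dyadicStep_le (hf : Antitone f) (n : ℕ) (t : ℝ) : dyadicStep f n t ≤ f t := by
  unfold dyadicStep
  by_cases ht : t ∈ Ioc 0 (n : ℝ)
  · rw [indicator_of_mem ht]
    exact hf (le_dyadicCeil n t)
  · rw [indicator_of_notMem ht]
    exact zero_le

lemma measurable_dyadicStep (hf : Antitone f) (n : ℕ) : Measurable (dyadicStep f n) :=
  (hf.measurable.comp (monotone_dyadicCeil n).measurable).indicator measurableSet_Ioc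

lemma tendsto_dyadicStep {t : ℝ} (ht : 0 < t) (hft : ContinuousAt f t) :
    Tendsto (fun n => dyadicStep f n t) atTop (𝓝 (f t)) := by
  refine (hft.tendsto.comp (tendsto_dyadicCeil t)).congr' ?_
  filter_upwards [eventually_ge_atTop ⌈t⌉₊] with n hn
  have htn : t ∈ Ioc 0 (n : ℝ) := ⟨ht, (Nat.le_ceil t).trans (by exact_mod_cast hn)⟩
  simp only [Function.comp_apply, dyadicStep, indicator_of_mem htn]

lemma lintegral_ofReal_mul_dyadicStep_rpow {s e : ℝ} (hs : 0 < s) (he : 0 < e) (n : ℕ) :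
    ∫⁻ t in Ioi (0 : ℝ), ENNReal.ofReal (s * t ^ (s - 1)) * dyadicStep f n t ^ e =
      ∑ i ∈ Finset.range (n * 2 ^ n), ENNReal.ofReal (((i + 1 : ℝ) / 2 ^ n) ^ s -
        ((i : ℝ) / 2 ^ n) ^ s) * f ((i + 1 : ℝ) / 2 ^ n) ^ e := by
  set z : ℕ → ℝ := fun i => (i : ℝ) / 2 ^ n
  have hz : Monotone z := fun i j hij => by dsimp only [z]; gcongr
  have hunion : Ioc 0 (n : ℝ) = ⋃ i ∈ Finset.range (n * 2 ^ n), Ioc (z i) (z (i + 1)) := by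
    have h := hz.biUnion_Ico_Ioc_map_succ 0 (n * 2 ^ n)
    simp only [Order.succ_eq_add_one, mem_Ico, zero_le, true_and] at h
    simp only [Finset.mem_range, h, z]
    push_cast
    rw [zero_div, mul_div_cancel_right₀ _ (by positivity)]
  have hpt : ∀ t, ENNReal.ofReal (s * t ^ (s - 1)) * dyadicStep f n t ^ e =
      (Ioc 0 (n : ℝ)).indicator
        (fun t => ENNReal.ofReal (s * t ^ (s - 1)) * f (dyadicCeil n t) ^ e) t := by
    intro t
    by_cases ht : t ∈ Ioc 0 (n : ℝ)
    · simp [dyadicStep, ht]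
    · simp [dyadicStep, ht, ENNReal.zero_rpow_of_pos he]
  simp_rw [hpt]
  rw [setLIntegral_indicator measurableSet_Ioc, inter_eq_self_of_subset_left Ioc_subset_Ioi_self,
    hunion, lintegral_biUnion_finset (t := fun i => Ioc (z i) (z (i + 1)))
      (hz.pairwise_disjoint_on_Ioc_succ.set_pairwise _)
      fun _ _ => measurableSet_Ioc]
  refine Finset.sum_congr rfl fun i _ => ?_
  have hcast : z (i + 1) = ((i + 1 : ℝ) / 2 ^ n) := by simp [z]
  rw [setLIntegral_congr_fun measurableSet_Ioc fun t ht => by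
      rw [dyadicCeil_eq_of_mem_Ioc (by simpa [z] using ht)],
    lintegral_mul_const _ (by fun_prop),
    lintegral_Ioc_ofReal_mul_rpow_sub_one hs (by positivity) (hz i.le_succ), hcast, mul_comm]

lemma lintegral_ofReal_mul_dyadicStep_rpow_le {p q : ℝ} (hp : 0 < p) (hpq : p ≤ q) (hf : Antitone f)
    (n : ℕ) :
    ∫⁻ t in Ioi (0 : ℝ), ENNReal.ofReal (q * t ^ (q - 1)) * dyadicStep f n t ^ (q / p) ≤
      (∫⁻ t in Ioi (0 : ℝ), ENNReal.ofReal (p * t ^ (p - 1)) * f t) ^ (q / p) := by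
  have hr : 1 ≤ q / p := (one_le_div hp).mpr hpq
  have hr0 : 0 < q / p := one_pos.trans_le hr
  set b : ℕ → ℝ≥0∞ := fun i => f ((i + 1 : ℝ) / 2 ^ n)
  set y : ℕ → ℝ := fun i => ((i : ℝ) / 2 ^ n) ^ p
  have hb : Antitone b := fun i j hij => hf (by gcongr)
  have hy : Monotone y := fun i j hij => by dsimp only [y]; gcongr
  have hy0 : y 0 = 0 := by simp [y, Real.zero_rpow hp.ne']
  have hyr : ∀ i : ℕ, y i ^ (q / p) = ((i : ℝ) / 2 ^ n) ^ q := fun i => by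
    rw [← Real.rpow_mul (by positivity), mul_div_cancel₀ _ hp.ne']
  calc _ = ∑ i ∈ Finset.range (n * 2 ^ n),
        ENNReal.ofReal (y (i + 1) ^ (q / p) - y i ^ (q / p)) * b i ^ (q / p) := by
        rw [lintegral_ofReal_mul_dyadicStep_rpow (hp.trans_le hpq) hr0]
        refine Finset.sum_congr rfl fun i _ => ?_
        rw [hyr, hyr]
        push_cast
        rfl
    _ ≤ (∑ i ∈ Finset.range (n * 2 ^ n), ENNReal.ofReal (y (i + 1) - y i) * b i) ^ (q / p) :=
        sum_ofReal_rpow_sub_mul_rpow_le hr hb hy0 hy _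
    _ = (∫⁻ t in Ioi (0 : ℝ), ENNReal.ofReal (p * t ^ (p - 1)) * dyadicStep f n t ^ (1 : ℝ)) ^
          (q / p) := by
        rw [lintegral_ofReal_mul_dyadicStep_rpow hp one_pos]
        simp only [ENNReal.rpow_one, y, b]
        push_cast
        rfl
    _ ≤ _ := by
        gcongr with t
        rw [ENNReal.rpow_one]
        exact dyadicStep_le hf n t

/-- On dyadic step functions this is `sum_ofReal_rpow_sub_mul_rpow_le`; these converge to `f` at
its continuity points, i.e. almost everywhere, and Fatou's lemma passes to the limit. -/
theorem lintegral_ofReal_mul_rpow_le_of_antitone {p q : ℝ} (hp : 0 < p) (hpq : p ≤ q)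
    (hf : Antitone f) :
    ∫⁻ t in Ioi (0 : ℝ), ENNReal.ofReal (q * t ^ (q - 1)) * f t ^ (q / p) ≤
      (∫⁻ t in Ioi (0 : ℝ), ENNReal.ofReal (p * t ^ (p - 1)) * f t) ^ (q / p) := by
  have hr0 : 0 < q / p := div_pos (hp.trans_le hpq) hp
  have hlim : ∀ᵐ t ∂volume.restrict (Ioi (0 : ℝ)), Tendsto (fun n =>
      ENNReal.ofReal (q * t ^ (q - 1)) * dyadicStep f n t ^ (q / p)) atTop
      (𝓝 (ENNReal.ofReal (q * t ^ (q - 1)) * f t ^ (q / p))) := by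
    have hcont : ∀ᵐ t ∂volume, ContinuousAt f t :=
      (measure_eq_zero_iff_ae_notMem.mp (hf.countable_not_continuousAt.measure_zero volume)).mono
        fun t ht => not_not.mp ht
    filter_upwards [ae_restrict_mem measurableSet_Ioi, ae_restrict_of_ae hcont] with t ht hft
    exact ENNReal.Tendsto.const_mul (((ENNReal.continuous_rpow_const).tendsto _).comp
      (tendsto_dyadicStep ht hft)) (Or.inr ENNReal.ofReal_ne_top)
  calc _ = ∫⁻ t in Ioi (0 : ℝ), liminf (fun n =>
        ENNReal.ofReal (q * t ^ (q - 1)) * dyadicStep f n t ^ (q / p)) atTop :=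
        lintegral_congr_ae (hlim.mono fun t ht => ht.liminf_eq.symm)
    _ ≤ liminf (fun n => ∫⁻ t in Ioi (0 : ℝ),
        ENNReal.ofReal (q * t ^ (q - 1)) * dyadicStep f n t ^ (q / p)) atTop :=
        lintegral_liminf_le' fun n => by
          have := measurable_dyadicStep hf n
          fun_prop
    _ ≤ _ := liminf_le_of_frequently_le' (Frequently.of_forall
        (lintegral_ofReal_mul_dyadicStep_rpow_le hp hpq hf))

lemma lintegral_ofReal_mul_rpow_le_rpow_lintegral {q : ℝ} (hq : 1 ≤ q) (hf : Antitone f) :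
    ∫⁻ t in Ioi (0 : ℝ), ENNReal.ofReal (q * t ^ (q - 1)) * f t ^ q ≤
      (∫⁻ t in Ioi (0 : ℝ), f t) ^ q := by
  simpa using lintegral_ofReal_mul_rpow_le_of_antitone one_pos hq hf

end Dyadic

lemma Ioo_zero_csSup_subset {S : Set ℝ} (hdown : ∀ ⦃a b⦄, 0 < b → b ≤ a → a ∈ S → b ∈ S) :
    Ioo 0 (sSup S) ⊆ S := by
  intro b hb
  rcases S.eq_empty_or_nonempty with rfl | hne
  · simp at hb
  obtain ⟨a, haS, hba⟩ := exists_lt_of_lt_csSup hne hb.2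
  exact hdown hb.1 hba.le haS

lemma measure_le_of_forall_Ioo_le {ν : Measure ℝ} (hν : ν ≪ volume) {R : Set ℝ → ℝ≥0∞}
    (hR : Monotone R) (h : ∀ z ∈ Ioi (0 : ℝ), ν (Ioo 0 z) ≤ R (Ioo 0 z)) {S : Set ℝ}
    (hS : S ⊆ Ioi 0) (hdown : ∀ ⦃a b⦄, 0 < b → b ≤ a → a ∈ S → b ∈ S) : ν S ≤ R S := by
  have hIoo : ∀ z, ν (Ioo 0 z) ≤ R (Ioo 0 z) := fun z => by
    rcases le_or_gt z 0 with hz | hz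
    · simp [Ioo_eq_empty_of_le hz]
    · exact h z hz
  by_cases hbdd : BddAbove S
  · calc ν S ≤ ν (Ioc 0 (sSup S)) := measure_mono fun x hx => ⟨hS hx, le_csSup hbdd hx⟩
      _ = ν (Ioo 0 (sSup S)) := measure_congr (hν.ae_eq Ioo_ae_eq_Ioc).symm
      _ ≤ R (Ioo 0 (sSup S)) := hIoo _
      _ ≤ R S := hR (Ioo_zero_csSup_subset hdown)
  · have hSeq : S = Ioi 0 := by
      refine hS.antisymm fun x hx => ?_
      obtain ⟨a, haS, hxa⟩ := not_bddAbove_iff.mp hbdd x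
      exact hdown hx hxa.le haS
    calc ν S = ⨆ z : ℝ, ν (Ioo 0 z) := by
          rw [hSeq, ← iUnion_Ioo_right, Monotone.measure_iUnion]
          exact fun a b hab => Ioo_subset_Ioo_right hab
      _ ≤ ⨆ z : ℝ, R (Ioo 0 z) := iSup_mono hIoo
      _ ≤ R S := iSup_le fun z => hR (hSeq ▸ Ioo_subset_Ioi_self)

lemma ENNReal.rpow_one_div_le_mul_rpow_one_div_iff {P Q : ℝ} (hQ : 0 < Q) {a b c : ℝ≥0∞} :
    a ^ (1 / Q) ≤ c * b ^ (1 / P) ↔ a ≤ c ^ Q * b ^ (Q / P) := by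
  rw [one_div Q, ENNReal.rpow_inv_le_iff hQ, ENNReal.mul_rpow_of_nonneg _ _ hQ.le,
    ← ENNReal.rpow_mul, one_div_mul_eq_div]

section Testing

variable {P Q C : ℝ} {V W : ℝ → ℝ≥0∞} {K : ℝ → ℝ → ℝ≥0∞} {g : ℝ → ℝ≥0∞}

lemma setLIntegral_le_of_forall_Ioo (hP : 0 < P) (hQ : 0 < Q)
    (htest : ∀ z ∈ Ioi (0 : ℝ), (∫⁻ x in Ioo 0 z, V x) ^ (1 / Q) ≤
      ENNReal.ofReal C * (∫⁻ x in Ioi (0 : ℝ), (∫⁻ y in Ioo 0 z, K x y) ^ P * W x) ^ (1 / P))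
    {S : Set ℝ} (hS : S ⊆ Ioi 0) (hdown : ∀ ⦃a b⦄, 0 < b → b ≤ a → a ∈ S → b ∈ S) :
    ∫⁻ x in S, V x ≤
      ENNReal.ofReal C ^ Q * (∫⁻ x in Ioi (0 : ℝ), (∫⁻ y in S, K x y) ^ P * W x) ^ (Q / P) := by
  have hR : Monotone fun S : Set ℝ =>
      ENNReal.ofReal C ^ Q * (∫⁻ x in Ioi (0 : ℝ), (∫⁻ y in S, K x y) ^ P * W x) ^ (Q / P) :=
    fun S T hST => by
      have := div_pos hQ hP
      dsimp only
      gcongr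
  simpa only [withDensity_apply'] using measure_le_of_forall_Ioo_le
    (withDensity_absolutelyContinuous volume V) hR
    (fun z hz => by
      simpa only [withDensity_apply', ENNReal.rpow_one_div_le_mul_rpow_one_div_iff hQ]
        using htest z hz) hS hdown


noncomputable def levelIntegral (K : ℝ → ℝ → ℝ≥0∞) (g : ℝ → ℝ≥0∞) (x t : ℝ) : ℝ≥0∞ :=
  ∫⁻ y in {y | ENNReal.ofReal t < g y} ∩ Ioi 0, K x y

lemma antitone_levelIntegral (K : ℝ → ℝ → ℝ≥0∞) (g : ℝ → ℝ≥0∞) (x : ℝ) :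
    Antitone (levelIntegral K g x) := fun _ _ hst =>
  lintegral_mono_set <| inter_subset_inter_left _ fun _ hy =>
    (ENNReal.ofReal_le_ofReal hst).trans_lt hy

lemma levelIntegral_eq_lintegral_indicator (hg : Measurable g) (x t : ℝ) :
    levelIntegral K g x t = ∫⁻ y in Ioi (0 : ℝ), {y | ENNReal.ofReal t < g y}.indicator (K x) y :=
  (setLIntegral_indicator (measurableSet_lt measurable_const hg) _).symm

lemma measurable_levelIntegral (hK : Measurable (Function.uncurry K)) (hg : Measurable g) :
    Measurable fun p : ℝ × ℝ => levelIntegral K g p.2 p.1 := by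
  simp_rw [levelIntegral_eq_lintegral_indicator hg]
  exact Measurable.lintegral_prod_right' (f := fun q : (ℝ × ℝ) × ℝ =>
    {y | ENNReal.ofReal q.1.1 < g y}.indicator (K q.1.2) q.2)
    ((hK.comp ((measurable_snd.comp measurable_fst).prodMk measurable_snd)).indicator
      (measurableSet_lt (ENNReal.measurable_ofReal.comp (measurable_fst.comp measurable_fst))
        (hg.comp measurable_snd)))

lemma lintegral_levelIntegral (hK : Measurable (Function.uncurry K)) (hg : Measurable g) (x : ℝ) :
    ∫⁻ t in Ioi (0 : ℝ), levelIntegral K g x t = ∫⁻ y in Ioi (0 : ℝ), K x y * g y := by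
  have hKx : Measurable (K x) := hK.comp (measurable_const.prodMk measurable_id)
  have h := lintegral_rpow_mul_eq_lintegral_setLIntegral_lt (μ := volume.restrict (Ioi 0)) hg hKx
    one_pos
  simp only [ENNReal.rpow_one, sub_self, Real.rpow_zero, mul_one, ENNReal.ofReal_one, one_mul,
    Measure.restrict_restrict (measurableSet_lt measurable_const hg)] at h
  simp_rw [mul_comm (K x _)]
  exact h.symm

lemma lintegral_rpow_mul_le_of_forall_Ioo (hP : 0 < P) (hPQ : P ≤ Q) (hV : Measurable V)
    (hg : Antitone g)
    (htest : ∀ z ∈ Ioi (0 : ℝ), (∫⁻ x in Ioo 0 z, V x) ^ (1 / Q) ≤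
      ENNReal.ofReal C * (∫⁻ x in Ioi (0 : ℝ), (∫⁻ y in Ioo 0 z, K x y) ^ P * W x) ^ (1 / P)) :
    ∫⁻ x in Ioi (0 : ℝ), g x ^ Q * V x ≤ ENNReal.ofReal C ^ Q * (∫⁻ t in Ioi (0 : ℝ),
      ENNReal.ofReal (P * t ^ (P - 1)) *
        ∫⁻ x in Ioi (0 : ℝ), levelIntegral K g x t ^ P * W x) ^ (Q / P) := by
  have hQ : 0 < Q := hP.trans_le hPQ
  have hlevel : ∀ t, ∫⁻ x in {x | ENNReal.ofReal t < g x}, V x ∂volume.restrict (Ioi 0) ≤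
      ENNReal.ofReal C ^ Q * (∫⁻ x in Ioi (0 : ℝ), levelIntegral K g x t ^ P * W x) ^ (Q / P) :=
    fun t => by
      rw [Measure.restrict_restrict (measurableSet_lt measurable_const hg.measurable)]
      exact setLIntegral_le_of_forall_Ioo hP hQ htest inter_subset_right
        fun a b hb hba ha => ⟨ha.1.trans_le (hg hba), hb⟩
  have hF : Antitone fun t => ∫⁻ x in Ioi (0 : ℝ), levelIntegral K g x t ^ P * W x :=
    fun s t hst => lintegral_mono fun x => by
      gcongr
      exact antitone_levelIntegral K g x hst
  calc ∫⁻ x in Ioi (0 : ℝ), g x ^ Q * V x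
      = ∫⁻ t in Ioi (0 : ℝ), ENNReal.ofReal (Q * t ^ (Q - 1)) *
          ∫⁻ x in {x | ENNReal.ofReal t < g x}, V x ∂volume.restrict (Ioi 0) :=
        lintegral_rpow_mul_eq_lintegral_setLIntegral_lt hg.measurable hV hQ
    _ ≤ ∫⁻ t in Ioi (0 : ℝ), ENNReal.ofReal (Q * t ^ (Q - 1)) * (ENNReal.ofReal C ^ Q *
          (∫⁻ x in Ioi (0 : ℝ), levelIntegral K g x t ^ P * W x) ^ (Q / P)) := by
        gcongr with t
        exact hlevel t
    _ = ENNReal.ofReal C ^ Q * ∫⁻ t in Ioi (0 : ℝ), ENNReal.ofReal (Q * t ^ (Q - 1)) *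
          (∫⁻ x in Ioi (0 : ℝ), levelIntegral K g x t ^ P * W x) ^ (Q / P) := by
        rw [← lintegral_const_mul' _ _ (ENNReal.rpow_ne_top_of_nonneg hQ.le ENNReal.ofReal_ne_top)]
        simp_rw [mul_left_comm]
    _ ≤ _ := by
        gcongr
        exact lintegral_ofReal_mul_rpow_le_of_antitone hP hPQ hF

lemma lintegral_ofReal_mul_lintegral_levelIntegral_le (hP : 1 ≤ P)
    (hK : Measurable (Function.uncurry K)) (hW : Measurable W) (hg : Antitone g) :
    ∫⁻ t in Ioi (0 : ℝ), ENNReal.ofReal (P * t ^ (P - 1)) *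
        ∫⁻ x in Ioi (0 : ℝ), levelIntegral K g x t ^ P * W x ≤
      ∫⁻ x in Ioi (0 : ℝ), (∫⁻ y in Ioi (0 : ℝ), K x y * g y) ^ P * W x := by
  have hmeas : Measurable fun p : ℝ × ℝ =>
      ENNReal.ofReal (P * p.1 ^ (P - 1)) * (levelIntegral K g p.2 p.1 ^ P * W p.2) := by
    have := measurable_levelIntegral hK hg.measurable
    fun_prop
  calc _ = ∫⁻ t in Ioi (0 : ℝ), ∫⁻ x in Ioi (0 : ℝ),
          ENNReal.ofReal (P * t ^ (P - 1)) * (levelIntegral K g x t ^ P * W x) :=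
        lintegral_congr fun t => (lintegral_const_mul' _ _ ENNReal.ofReal_ne_top).symm
    _ = ∫⁻ x in Ioi (0 : ℝ), (∫⁻ t in Ioi (0 : ℝ),
          ENNReal.ofReal (P * t ^ (P - 1)) * levelIntegral K g x t ^ P) * W x := by
        rw [lintegral_lintegral_swap hmeas.aemeasurable]
        refine lintegral_congr fun x => ?_
        rw [← lintegral_mul_const _ (by
          have := (antitone_levelIntegral K g x).measurable
          fun_prop)]
        simp_rw [mul_assoc]
    _ ≤ ∫⁻ x in Ioi (0 : ℝ), (∫⁻ t in Ioi (0 : ℝ), levelIntegral K g x t) ^ P * W x := by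
        gcongr with x
        exact lintegral_ofReal_mul_rpow_le_rpow_lintegral hP (antitone_levelIntegral K g x)
    _ = _ := by simp_rw [lintegral_levelIntegral hK hg.measurable]

theorem rpow_lintegral_le_of_forall_Ioo (hP : 1 ≤ P) (hPQ : P ≤ Q)
    (hK : Measurable (Function.uncurry K)) (hV : Measurable V) (hW : Measurable W)
    (htest : ∀ z ∈ Ioi (0 : ℝ), (∫⁻ x in Ioo 0 z, V x) ^ (1 / Q) ≤
      ENNReal.ofReal C * (∫⁻ x in Ioi (0 : ℝ), (∫⁻ y in Ioo 0 z, K x y) ^ P * W x) ^ (1 / P))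
    (hg : Antitone g) :
    (∫⁻ x in Ioi (0 : ℝ), g x ^ Q * V x) ^ (1 / Q) ≤ ENNReal.ofReal C *
      (∫⁻ x in Ioi (0 : ℝ), (∫⁻ y in Ioi (0 : ℝ), K x y * g y) ^ P * W x) ^ (1 / P) := by
  have hP0 : 0 < P := one_pos.trans_le hP
  rw [ENNReal.rpow_one_div_le_mul_rpow_one_div_iff (hP0.trans_le hPQ)]
  refine (lintegral_rpow_mul_le_of_forall_Ioo hP0 hPQ hV hg htest).trans ?_
  have := div_pos (hP0.trans_le hPQ) hP0
  gcongr _ * ?_ ^ _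
  exact lintegral_ofReal_mul_lintegral_levelIntegral_le hP hK hW hg

end Testing

lemma AntitoneOn.exists_antitone_eqOn {h : ℝ → ℝ≥0∞} (hh : AntitoneOn h (Ioi 0)) :
    ∃ g : ℝ → ℝ≥0∞, Antitone g ∧ EqOn g h (Ioi 0) := by
  refine ⟨fun t => if 0 < t then h t else ⊤, fun s t hst => ?_, fun t ht => if_pos ht⟩
  by_cases hs : 0 < s
  · simp only [hs, hs.trans_le hst, if_true]
    exact hh hs (hs.trans_le hst) hst
  · simp only [hs, if_false]
    exact le_top

lemma antitoneOn_indicator_Ioo_one (z : ℝ) :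
    AntitoneOn ((Ioo 0 z).indicator (1 : ℝ → ℝ≥0∞)) (Ioi 0) := by
  intro s hs t _ hst
  by_cases ht : t ∈ Ioo 0 z
  · rw [indicator_of_mem ht, indicator_of_mem (show s ∈ Ioo 0 z from ⟨hs, hst.trans_lt ht.2⟩)]
    rfl
  · rw [indicator_of_notMem ht]
    exact zero_le

lemma indicator_one_rpow_mul {s : Set ℝ} {q : ℝ} (hq : 0 < q) (c : ℝ → ℝ≥0∞) (x : ℝ) :
    s.indicator 1 x ^ q * c x = s.indicator c x := by
  by_cases hx : x ∈ s <;> simp [hx, ENNReal.zero_rpow_of_pos hq]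

lemma mul_indicator_one {s : Set ℝ} (c : ℝ → ℝ≥0∞) (x : ℝ) :
    c x * s.indicator 1 x = s.indicator c x := by
  by_cases hx : x ∈ s <;> simp [hx]

theorem lai_duality_general (P Q : ℝ) (hP : 1 ≤ P) (hPQ : P ≤ Q)
    (φ : ℝ → ℝ → ℝ) (hφmeas : Measurable (Function.uncurry φ))
    (v w : ℝ → ℝ) (hv : Measurable v) (hw : Measurable w)
    (C : ℝ) :
    (∀ h : ℝ → ℝ≥0∞, AntitoneOn h (Ioi 0) →
      (∫⁻ x in Ioi (0 : ℝ), h x ^ Q * ENNReal.ofReal (v x)) ^ (1 / Q) ≤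
        ENNReal.ofReal C *
          (∫⁻ x in Ioi (0 : ℝ),
            (∫⁻ y in Ioi (0 : ℝ), ENNReal.ofReal (φ x y) * h y) ^ P *
              ENNReal.ofReal (w x)) ^ (1 / P)) ↔
    (∀ z ∈ Ioi (0 : ℝ),
      (∫⁻ x in Ioo (0 : ℝ) z, ENNReal.ofReal (v x)) ^ (1 / Q) ≤
        ENNReal.ofReal C *
          (∫⁻ x in Ioi (0 : ℝ),
            (∫⁻ y in Ioo (0 : ℝ) z, ENNReal.ofReal (φ x y)) ^ P *
              ENNReal.ofReal (w x)) ^ (1 / P)) := by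
  have hQ : 0 < Q := one_pos.trans_le (hP.trans hPQ)
  constructor
  · intro hall z _
    have key := hall _ (antitoneOn_indicator_Ioo_one z)
    have hv' : ∀ x, (Ioo 0 z).indicator 1 x ^ Q * ENNReal.ofReal (v x) =
        (Ioo 0 z).indicator (fun x => ENNReal.ofReal (v x)) x := indicator_one_rpow_mul hQ _
    have hφ' : ∀ x y, ENNReal.ofReal (φ x y) * (Ioo 0 z).indicator 1 y =
        (Ioo 0 z).indicator (fun y => ENNReal.ofReal (φ x y)) y := fun x => mul_indicator_one _
    simpa only [hv', hφ', setLIntegral_indicator measurableSet_Ioo,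
      inter_eq_self_of_subset_left Ioo_subset_Ioi_self] using key
  · intro htest h hh
    obtain ⟨g, hg, hgh⟩ := hh.exists_antitone_eqOn
    have hrw : ∀ F : ℝ → ℝ≥0∞ → ℝ≥0∞,
        ∫⁻ x in Ioi (0 : ℝ), F x (h x) = ∫⁻ x in Ioi (0 : ℝ), F x (g x) :=
      fun F => setLIntegral_congr_fun measurableSet_Ioi fun x hx => by rw [hgh hx]
    rw [hrw fun x a => a ^ Q * ENNReal.ofReal (v x)]
    simp_rw [fun x => hrw fun y a => ENNReal.ofReal (φ x y) * a]
    exact rpow_lintegral_le_of_forall_Ioo hP hPQ (by fun_prop) (by fun_prop) (by fun_prop)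
      htest hg

/-- Lai, Theorem 2.1. For `1 ≤ P ≤ Q < ∞`, a measurable nonnegative kernel
`φ` and a.e. positive measurable weights `v, w` on `(0,∞)`, the weighted inequality for all
non-increasing `h : (0,∞) → [0,∞]` holds with constant `C` iff it holds for the
characteristic functions of the intervals `(0,z)` with the same constant. -/
theorem lai_duality (P Q : ℝ) (hP : 1 ≤ P) (hPQ : P ≤ Q)
    (φ : ℝ → ℝ → ℝ) (hφmeas : Measurable (Function.uncurry φ)) (hφ0 : ∀ x y, 0 ≤ φ x y)
    (v w : ℝ → ℝ) (hv : Measurable v) (hw : Measurable w)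
    (hvpos : ∀ᵐ x ∂(volume.restrict (Ioi (0 : ℝ))), 0 < v x)
    (hwpos : ∀ᵐ x ∂(volume.restrict (Ioi (0 : ℝ))), 0 < w x)
    (C : ℝ) (hC : 0 < C) :
    (∀ h : ℝ → ℝ≥0∞, AntitoneOn h (Ioi 0) →
      (∫⁻ x in Ioi (0 : ℝ), h x ^ Q * ENNReal.ofReal (v x)) ^ (1 / Q) ≤
        ENNReal.ofReal C *
          (∫⁻ x in Ioi (0 : ℝ),
            (∫⁻ y in Ioi (0 : ℝ), ENNReal.ofReal (φ x y) * h y) ^ P *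
              ENNReal.ofReal (w x)) ^ (1 / P)) ↔
    (∀ z ∈ Ioi (0 : ℝ),
      (∫⁻ x in Ioo (0 : ℝ) z, ENNReal.ofReal (v x)) ^ (1 / Q) ≤
        ENNReal.ofReal C *
          (∫⁻ x in Ioi (0 : ℝ),
            (∫⁻ y in Ioo (0 : ℝ) z, ENNReal.ofReal (φ x y)) ^ P *
              ENNReal.ofReal (w x)) ^ (1 / P)) :=
  lai_duality_general P Q hP hPQ φ hφmeas v w hv hw C
end
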